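/- arXiv:2405.16643 — 3 statements merged into one kernel-verified Lean document; each statement's English description precedes it below -/
import Mathlib

section
/- Suppose Assumption 3 holds and there exist k > 0 and γ ∈ ∂ₖF(k,0) with γ < ρ (where ρ > 0). Then every increasing concave function V : ℝ₊₊ → ℝ satisfies the growth condition lim_{T→∞} e^{-ρT} V(k⁺(T,k̄)) = 0 for all k̄ > 0; that is, 𝒱 coincides with the set of all increasing concave real-valued functions on ℝ₊₊. -/
open MeasureTheory Real Set Filter Topology
open scoped ENNReal NNReal

noncomputable section

/- ## Basic analytic notions -/

/-- The positive part of an extended real number, as an element of `ℝ≥0∞`. -/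
def eposPart (x : EReal) : ℝ≥0∞ := if x = ⊤ then ⊤ else ENNReal.ofReal x.toReal

/-- `f` is absolutely continuous on `[a, b]`. -/
def AbsContOn (f : ℝ → ℝ) (a b : ℝ) : Prop :=
  ∀ ε > (0:ℝ), ∃ δ > (0:ℝ), ∀ n : ℕ, ∀ s t : Fin n → ℝ,
    (∀ i, a ≤ s i ∧ s i ≤ t i ∧ t i ≤ b) →
    (Pairwise fun i j => Disjoint (Set.Ioo (s i) (t i)) (Set.Ioo (s j) (t j))) →
    (∑ i, (t i - s i)) < δ → (∑ i, |f (t i) - f (s i)|) < ε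

/-- `f` is absolutely continuous on every compact subinterval of `ℝ₊`. -/
def LocAbsCont (f : ℝ → ℝ) : Prop := ∀ a b : ℝ, 0 ≤ a → a < b → AbsContOn f a b

/-- The set `W₁` of nonnegative locally integrable control paths. -/
def W1 : Set (ℝ → ℝ) := {c | (∀ t, 0 ≤ c t) ∧ ∀ T > (0:ℝ), IntegrableOn c (Set.Icc 0 T)}

/-- The set `W₂` of nonnegative measurable locally bounded control paths. -/
def W2 : Set (ℝ → ℝ) :=
  {c | (∀ t, 0 ≤ c t) ∧ Measurable c ∧ ∀ T > (0:ℝ), ∃ M : ℝ, ∀ t ∈ Set.Icc (0:ℝ) T, c t ≤ M}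

/-- Assumption 1: positive discount rate, and `W` is `W₁` or `W₂`. -/
def Assumption1 (ρ : ℝ) (W : Set (ℝ → ℝ)) : Prop := 0 < ρ ∧ (W = W1 ∨ W = W2)

def posOrth : Set (ℝ × ℝ) := {p | 0 ≤ p.1 ∧ 0 ≤ p.2}
def posOrthOpen : Set (ℝ × ℝ) := {p | 0 < p.1 ∧ 0 < p.2}

/-- The realized (real-valued) utility. -/
def ur (u : ℝ → ℝ → EReal) (c k : ℝ) : ℝ := (u c k).toReal
/-- The partial derivative `∂u/∂c`. -/
def ucDeriv (u : ℝ → ℝ → EReal) (c k : ℝ) : ℝ := deriv (fun c' => ur u c' k) c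
/-- The partial derivative `∂u/∂k`. -/
def ukDeriv (u : ℝ → ℝ → EReal) (c k : ℝ) : ℝ := deriv (fun k' => ur u c k') k

/-- Assumption 2 on the instantaneous utility function `u : ℝ₊² → ℝ ∪ {-∞}`. -/
structure Assumption2 (u : ℝ → ℝ → EReal) : Prop where
  ne_top : ∀ c k : ℝ, u c k ≠ ⊤
  cont : ContinuousOn (fun p : ℝ × ℝ => u p.1 p.2) posOrth
  concave : ∀ c₁ k₁ c₂ k₂ t : ℝ, 0 ≤ c₁ → 0 ≤ k₁ → 0 ≤ c₂ → 0 ≤ k₂ → 0 ≤ t → t ≤ 1 →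
    ((1 - t : ℝ) : EReal) * u c₁ k₁ + (t : EReal) * u c₂ k₂ ≤
      u ((1 - t) * c₁ + t * c₂) ((1 - t) * k₁ + t * k₂)
  mono : ∀ c₁ k₁ c₂ k₂ : ℝ, 0 ≤ c₁ → 0 ≤ k₁ → c₁ ≤ c₂ → k₁ ≤ k₂ → u c₁ k₁ ≤ u c₂ k₂
  strictMono_c : ∀ k c₁ c₂ : ℝ, 0 < k → 0 < c₁ → c₁ < c₂ → u c₁ k < u c₂ k
  ne_bot_pos : ∀ c k : ℝ, 0 < c → 0 < k → u c k ≠ ⊥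
  smooth : ContDiffOn ℝ 1 (fun p : ℝ × ℝ => ur u p.1 p.2) posOrthOpen
  ne_bot_zero : ∃ c > (0:ℝ), u c 0 ≠ ⊥

/-- Assumption 3 on the technology function `F : ℝ₊² → ℝ` (with `F k c`). -/
structure Assumption3 (W : Set (ℝ → ℝ)) (F : ℝ → ℝ → ℝ) : Prop where
  cont : ContinuousOn (fun p : ℝ × ℝ => F p.1 p.2) posOrth
  concave : ConcaveOn ℝ posOrth (fun p : ℝ × ℝ => F p.1 p.2)
  zero : F 0 0 = 0
  anti_c : ∀ k c₁ c₂ : ℝ, 0 ≤ k → 0 ≤ c₁ → c₁ < c₂ → F k c₂ < F k c₁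
  lower : ∃ d₁ > (0:ℝ), ∃ δ₂ : ℝ → ℝ, (∀ c : ℝ, 0 ≤ c → 0 ≤ δ₂ c) ∧ δ₂ 0 = 0 ∧
    (∀ c₁ c₂ : ℝ, 0 ≤ c₁ → c₁ < c₂ → δ₂ c₁ < δ₂ c₂) ∧
    (∀ k c : ℝ, 0 < k → 0 ≤ c → -d₁ * k - δ₂ c < F k c) ∧
    (W = W1 → ∃ d₂ : ℝ, 0 ≤ d₂ ∧ ∀ c : ℝ, 0 ≤ c → δ₂ c = d₂ * c)
  productive : ∀ c : ℝ, 0 ≤ c → ∃ k > (0:ℝ), F 0 c < F k c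

/-- Assumption 4 on the marginal utility of consumption. -/
structure Assumption4 (u : ℝ → ℝ → EReal) : Prop where
  anti : ∀ k c₁ c₂ : ℝ, 0 < k → 0 < c₁ → c₁ < c₂ → ucDeriv u c₂ k < ucDeriv u c₁ k
  tendsto_zero : ∀ k > (0:ℝ), Tendsto (fun c => ucDeriv u c k) (𝓝[>] (0:ℝ)) atTop
  tendsto_top : ∀ k > (0:ℝ), Tendsto (fun c => ucDeriv u c k) atTop (𝓝 0)
  k_bounded : ∀ k > (0:ℝ), ∃ M : ℝ, ∀ᶠ c in 𝓝[>] (0:ℝ), ukDeriv u c k ≤ M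

/-- The CRRA (constant relative risk aversion) function. -/
def crra (θ x : ℝ) : ℝ := if θ = 1 then Real.log x else (x ^ (1 - θ) - 1) / (1 - θ)

/-- The CRRA function extended to `x = 0` with value `-∞` when `θ ≥ 1`. -/
def crraE (θ x : ℝ) : EReal :=
  if 0 < x then ((crra θ x : ℝ) : EReal)
  else if θ < 1 then ((-1 / (1 - θ) : ℝ) : EReal) else ⊥

/-- Assumption 5 with explicit parameters. -/
structure Assumption5Data (ρ : ℝ) (u : ℝ → ℝ → EReal) (F : ℝ → ℝ → ℝ)
    (kstar cstar γ δ θ a b C : ℝ) : Prop where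
  kstar_pos : 0 < kstar
  cstar_nonneg : 0 ≤ cstar
  gamma_pos : 0 < γ
  delta_pos : 0 < δ
  theta_pos : 0 < θ
  a_pos : 0 < a
  b_nonneg : 0 ≤ b
  subdiff : ∀ k c : ℝ, 0 ≤ k → 0 ≤ c →
    F k c - F kstar cstar ≤ γ * (k - kstar) - δ * (c - cstar)
  rate : 0 < ρ - (1 - θ) * γ
  bound : ∀ c k : ℝ, 0 < c → 0 < k →
    u c k ≤ ((a * crra θ c + b * crra θ k + C : ℝ) : EReal)

/-- Assumption 5. -/
def Assumption5 (ρ : ℝ) (u : ℝ → ℝ → EReal) (F : ℝ → ℝ → ℝ) : Prop :=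
  ∃ kstar cstar γ δ θ a b C : ℝ, Assumption5Data ρ u F kstar cstar γ δ θ a b C

/-- The partial derivative `∂F/∂c`. -/
def FcDeriv (F : ℝ → ℝ → ℝ) (k c : ℝ) : ℝ := deriv (fun c' => F k c') c
/-- The mixed partial derivative `∂²F/∂k∂c`. -/
def FckDeriv (F : ℝ → ℝ → ℝ) (k c : ℝ) : ℝ := deriv (fun k' => FcDeriv F k' c) k
/-- The right partial derivative `D_{k,+}F(k,c)` of the concave function `k ↦ F(k,c)`. -/
def rightDerivK (F : ℝ → ℝ → ℝ) (k c : ℝ) : ℝ :=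
  sSup {r : ℝ | ∃ t > (0:ℝ), r = (F (k + t) c - F k c) / t}

/-- Assumption 6. -/
structure Assumption6 (ρ : ℝ) (u : ℝ → ℝ → EReal) (F : ℝ → ℝ → ℝ) : Prop where
  smooth : ∃ ε₀ > (0:ℝ),
    (∀ c > (0:ℝ), ContDiffOn ℝ 1 (fun k => ucDeriv u c k) (Set.Ioo 0 ε₀)) ∧
    ∃ H : ℝ → ℝ → ℝ,
      ContDiffOn ℝ 1 (fun p : ℝ × ℝ => H p.1 p.2) (Set.Ioo 0 ε₀ ×ˢ Set.Ioi 0) ∧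
      (∀ k c : ℝ, k ∈ Set.Ioo 0 ε₀ → 0 < c → 0 < deriv (fun k' => H k' c) k) ∧
      (∀ k c : ℝ, k ∈ Set.Ioo 0 ε₀ → 0 < c → deriv (fun c' => H k c') c < 0) ∧
      (∀ k c : ℝ, k ∈ Set.Ioo 0 ε₀ → 0 < c → H k c ≠ 0 →
        ∃ ε > (0:ℝ),
          (∀ p ∈ Metric.ball ((k, c) : ℝ × ℝ) ε,
            HasDerivAt (fun c' => F p.1 c') (FcDeriv F p.1 p.2) p.2) ∧
          ContinuousOn (fun p : ℝ × ℝ => FcDeriv F p.1 p.2) (Metric.ball ((k, c) : ℝ × ℝ) ε) ∧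
          (∀ p ∈ Metric.ball ((k, c) : ℝ × ℝ) ε,
            HasDerivAt (fun k' => FcDeriv F k' p.2) (FckDeriv F p.1 p.2) p.1) ∧
          ContinuousOn (fun p : ℝ × ℝ => FckDeriv F p.1 p.2) (Metric.ball ((k, c) : ℝ × ℝ) ε))
  steep : ∃ k > (0:ℝ), ∃ r : ℝ, ρ < r ∧ ∀ c : ℝ, 0 ≤ c → r ≤ rightDerivK F k c

/- ## Payoffs and the value function -/

/-- The discounted utility flow `e^{-ρt} u(c(t), k(t))`, as an extended real. -/
def discounted (ρ : ℝ) (u : ℝ → ℝ → EReal) (k c : ℝ → ℝ) (t : ℝ) : EReal :=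
  ((Real.exp (-ρ * t) : ℝ) : EReal) * u (c t) (k t)

def payoffPos (ρ : ℝ) (u : ℝ → ℝ → EReal) (k c : ℝ → ℝ) : ℝ≥0∞ :=
  ∫⁻ t in Set.Ioi (0:ℝ), eposPart (discounted ρ u k c t)

def payoffNeg (ρ : ℝ) (u : ℝ → ℝ → EReal) (k c : ℝ → ℝ) : ℝ≥0∞ :=
  ∫⁻ t in Set.Ioi (0:ℝ), eposPart (-(discounted ρ u k c t))

/-- `∫₀^∞ e^{-ρt} u(c(t),k(t)) dt` can be defined (possibly `±∞`). -/
def PayoffDefined (ρ : ℝ) (u : ℝ → ℝ → EReal) (k c : ℝ → ℝ) : Prop :=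
  payoffPos ρ u k c ≠ ⊤ ∨ payoffNeg ρ u k c ≠ ⊤

/-- `∫₀^∞ e^{-ρt} u(c(t),k(t)) dt`, as an extended real. -/
def payoff (ρ : ℝ) (u : ℝ → ℝ → EReal) (k c : ℝ → ℝ) : EReal :=
  (payoffPos ρ u k c : EReal) - (payoffNeg ρ u k c : EReal)

/-- `∫₀^T e^{-ρt} u(c(t),k(t)) dt`, as an extended real. -/
def payoffUpTo (ρ : ℝ) (u : ℝ → ℝ → EReal) (k c : ℝ → ℝ) (T : ℝ) : EReal :=
  ((∫⁻ t in Set.Ioc (0:ℝ) T, eposPart (discounted ρ u k c t) : ℝ≥0∞) : EReal) -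
  ((∫⁻ t in Set.Ioc (0:ℝ) T, eposPart (-(discounted ρ u k c t)) : ℝ≥0∞) : EReal)

/-- The admissible pairs of problem (1) with initial capital `kbar`. -/
structure Admissible (ρ : ℝ) (W : Set (ℝ → ℝ)) (u : ℝ → ℝ → EReal) (F : ℝ → ℝ → ℝ)
    (kbar : ℝ) (k c : ℝ → ℝ) : Prop where
  locAC : LocAbsCont k
  mem_W : c ∈ W
  k_nonneg : ∀ t : ℝ, 0 ≤ t → 0 ≤ k t
  c_nonneg : ∀ t : ℝ, 0 ≤ t → 0 ≤ c t
  defined : PayoffDefined ρ u k c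
  init : k 0 = kbar
  ode : ∀ᵐ t : ℝ, 0 < t → HasDerivAt k (F (k t) (c t)) t

/-- The value function of problem (1). -/
def Vbar (ρ : ℝ) (W : Set (ℝ → ℝ)) (u : ℝ → ℝ → EReal) (F : ℝ → ℝ → ℝ) (kbar : ℝ) : EReal :=
  sSup {x : EReal | ∃ k c : ℝ → ℝ, Admissible ρ W u F kbar k c ∧ x = payoff ρ u k c}

/-- The value function, realized as a real-valued function. -/
def VbarR (ρ : ℝ) (W : Set (ℝ → ℝ)) (u : ℝ → ℝ → EReal) (F : ℝ → ℝ → ℝ) (kbar : ℝ) : ℝ :=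
  (Vbar ρ W u F kbar).toReal

/-- The value function is finite. -/
def VbarFinite (ρ : ℝ) (W : Set (ℝ → ℝ)) (u : ℝ → ℝ → EReal) (F : ℝ → ℝ → ℝ) : Prop :=
  ∀ k : ℝ, 0 < k → Vbar ρ W u F k ≠ ⊤ ∧ Vbar ρ W u F k ≠ ⊥

/- ## The HJB equation -/

/-- The Hamiltonian `sup_{c ≥ 0} {F(k,c)p + u(c,k)}`. -/
def Ham (u : ℝ → ℝ → EReal) (F : ℝ → ℝ → ℝ) (k p : ℝ) : EReal :=
  ⨆ c : {c : ℝ // 0 ≤ c}, (((F k c.1 * p : ℝ) : EReal) + u c.1 k)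

def IsViscositySubsolution (ρ : ℝ) (u : ℝ → ℝ → EReal) (F : ℝ → ℝ → ℝ) (V : ℝ → ℝ) : Prop :=
  UpperSemicontinuousOn V (Set.Ioi 0) ∧
  ∀ k : ℝ, 0 < k → ∀ φ : ℝ → ℝ, ∀ δ > (0:ℝ), Metric.ball k δ ⊆ Set.Ioi 0 →
    ContDiffOn ℝ 1 φ (Metric.ball k δ) → φ k = V k →
    (∀ x ∈ Metric.ball k δ, φ x ≤ V x) →
    Ham u F k (deriv φ k) ≤ ((ρ * V k : ℝ) : EReal)

def IsViscositySupersolution (ρ : ℝ) (u : ℝ → ℝ → EReal) (F : ℝ → ℝ → ℝ) (V : ℝ → ℝ) : Prop :=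
  LowerSemicontinuousOn V (Set.Ioi 0) ∧
  ∀ k : ℝ, 0 < k → ∀ φ : ℝ → ℝ, ∀ δ > (0:ℝ), Metric.ball k δ ⊆ Set.Ioi 0 →
    ContDiffOn ℝ 1 φ (Metric.ball k δ) → φ k = V k →
    (∀ x ∈ Metric.ball k δ, V x ≤ φ x) →
    ((ρ * V k : ℝ) : EReal) ≤ Ham u F k (deriv φ k)

def IsViscositySolution (ρ : ℝ) (u : ℝ → ℝ → EReal) (F : ℝ → ℝ → ℝ) (V : ℝ → ℝ) : Prop :=
  ContinuousOn V (Set.Ioi 0) ∧ IsViscositySubsolution ρ u F V ∧ IsViscositySupersolution ρ u F V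

/-- `V` is a classical (continuously differentiable) solution to the HJB equation on `ℝ₊₊`. -/
def IsClassicalSolution (ρ : ℝ) (u : ℝ → ℝ → EReal) (F : ℝ → ℝ → ℝ) (V : ℝ → ℝ) : Prop :=
  (∀ k : ℝ, 0 < k → DifferentiableAt ℝ V k) ∧ ContinuousOn (deriv V) (Set.Ioi 0) ∧
  ∀ k : ℝ, 0 < k → Ham u F k (deriv V k) = ((ρ * V k : ℝ) : EReal)

/- ## Subdifferentials -/

/-- The subdifferential (superdifferential) of a concave function `G` on the set `S`. -/
def subdiffOn (G : ℝ → ℝ) (S : Set ℝ) (x : ℝ) : Set ℝ :=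
  {p : ℝ | ∀ y ∈ S, G y - G x ≤ p * (y - x)}

/- ## ODEs and differential inclusions -/

/-- A positive solution of the autonomous ODE `k' = h(k)`, `k(0) = kbar`, on the interval `I`. -/
structure SolvesODEOn (h : ℝ → ℝ) (kbar : ℝ) (k : ℝ → ℝ) (I : Set ℝ) : Prop where
  locAC : ∀ a b : ℝ, a ∈ I → b ∈ I → a < b → AbsContOn k a b
  init : k 0 = kbar
  pos : ∀ t ∈ I, 0 < k t
  hasDeriv : ∀ᵐ t : ℝ, t ∈ I → HasDerivAt k (h (k t)) t

/-- A positive solution of the differential inclusion `k' ∈ Γ(k)`, `k(0) = kbar`, on `I`. -/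
structure SolvesInclOn (Γ : ℝ → Set ℝ) (kbar : ℝ) (k : ℝ → ℝ) (I : Set ℝ) : Prop where
  locAC : ∀ a b : ℝ, a ∈ I → b ∈ I → a < b → AbsContOn k a b
  init : k 0 = kbar
  pos : ∀ t ∈ I, 0 < k t
  hasDeriv : ∀ᵐ t : ℝ, t ∈ I → ∃ d ∈ Γ (k t), HasDerivAt k d t

/-- The pure accumulation path with initial value `kbar`. -/
def IsPurePath (F : ℝ → ℝ → ℝ) (kbar : ℝ) (k : ℝ → ℝ) : Prop :=
  SolvesODEOn (fun x => F x 0) kbar k (Set.Ici 0)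

/-- The growth condition (7). -/
def GrowthCondition (ρ : ℝ) (F : ℝ → ℝ → ℝ) (V : ℝ → ℝ) : Prop :=
  ∀ kbar : ℝ, 0 < kbar → ∀ kp : ℝ → ℝ, IsPurePath F kbar kp →
    Tendsto (fun T => Real.exp (-ρ * T) * V (kp T)) atTop (𝓝 0)

/-- Membership in the space `𝒱` of increasing concave functions satisfying the growth
condition. -/
def memV (ρ : ℝ) (F : ℝ → ℝ → ℝ) (V : ℝ → ℝ) : Prop :=
  StrictMonoOn V (Set.Ioi 0) ∧ ConcaveOn ℝ (Set.Ioi 0) V ∧ GrowthCondition ρ F V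

/- ## The maximizing consumption selection and the optimal differential inclusion -/

/-- `cs` is the positive continuous maximizer function `c*(p,k)` of Proposition 1. -/
def IsMaxSelection (u : ℝ → ℝ → EReal) (F : ℝ → ℝ → ℝ) (cs : ℝ → ℝ → ℝ) : Prop :=
  (∀ p k : ℝ, 0 < p → 0 < k → 0 < cs p k) ∧
  ContinuousOn (fun q : ℝ × ℝ => cs q.1 q.2) posOrthOpen ∧
  ∀ p k : ℝ, 0 < p → 0 < k →
    ((F k (cs p k) * p : ℝ) : EReal) + u (cs p k) k = Ham u F k p

/-- The set `F(k, c*(∂V(k), k))`. -/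
def inclSet (F : ℝ → ℝ → ℝ) (cs : ℝ → ℝ → ℝ) (V : ℝ → ℝ) (k : ℝ) : Set ℝ :=
  {d : ℝ | ∃ p ∈ subdiffOn V (Set.Ioi 0) k, d = F k (cs p k)}

/-- `limsup_{n → ∞} n (k(t + 1/n) - k(t))`. -/
def forwardSlope (k : ℝ → ℝ) (t : ℝ) : ℝ :=
  Filter.limsup (fun n : ℕ => (n : ℝ) * (k (t + 1 / (n : ℝ)) - k t)) Filter.atTop

/-- The consumption path (13): `c(t)` is the element of `c*(∂V(k(t)), k(t))` closest to
`limsup_{n} n (k(t+1/n) - k(t))`. -/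
def IsClosestConsumption (F : ℝ → ℝ → ℝ) (cs : ℝ → ℝ → ℝ) (V : ℝ → ℝ)
    (k : ℝ → ℝ) (c : ℝ → ℝ) : Prop :=
  ∀ t : ℝ, 0 ≤ t →
    (∃ p ∈ subdiffOn V (Set.Ioi 0) (k t), c t = cs p (k t)) ∧
    ∀ p ∈ subdiffOn V (Set.Ioi 0) (k t),
      |forwardSlope k t - c t| ≤ |forwardSlope k t - cs p (k t)|

/-- Membership in the class `B_k̄`. -/
structure MemB (ρ : ℝ) (W : Set (ℝ → ℝ)) (u : ℝ → ℝ → EReal) (F : ℝ → ℝ → ℝ)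
    (kbar : ℝ) (k c : ℝ → ℝ) : Prop where
  locAC : LocAbsCont k
  mem_W : c ∈ W
  k_nonneg : ∀ t : ℝ, 0 ≤ t → 0 ≤ k t
  c_nonneg : ∀ t : ℝ, 0 ≤ t → 0 ≤ c t
  lim_exists : ∃ L : ℝ, Tendsto (fun T => payoffUpTo ρ u k c T) atTop (𝓝 ((L : ℝ) : EReal))
  init : k 0 = kbar
  ode : ∀ᵐ t : ℝ, 0 < t → HasDerivAt k (F (k t) (c t)) t

/- ## Quantities appearing in Lemma 4 -/

def khat (F : ℝ → ℝ → ℝ) (kstar cstar γ δ kbar : ℝ) : ℝ :=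
  kbar - kstar + (δ * cstar + F kstar cstar) / γ

def CstarConst (ρ θ γ δ kh : ℝ) : ℝ := (ρ - (1 - θ) * γ) / (θ * δ) * kh

def V3val (ρ θ γ Cs : ℝ) : ℝ :=
  if θ = 1 then Real.log Cs / ρ + (γ - ρ) / ρ ^ 2
  else Cs ^ (1 - θ) * θ / ((1 - θ) * (ρ - (1 - θ) * γ)) - 1 / (ρ * (1 - θ))

def V4val (ρ θ γ kh : ℝ) : ℝ :=
  if θ = 1 then Real.log kh / ρ + γ / ρ ^ 2
  else kh ^ (1 - θ) / ((1 - θ) * (ρ - (1 - θ) * γ)) - 1 / (ρ * (1 - θ))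

/- ## Carathéodory equations (Lemma 3) -/

/-- Carathéodory's condition for `h(t,x)` relative to the region `U`. -/
def Caratheodory (h : ℝ → ℝ → ℝ) (U : Set (ℝ × ℝ)) : Prop :=
  (∀ t : ℝ, ContinuousOn (fun x => h t x) {x : ℝ | (t, x) ∈ U}) ∧
  (∀ x : ℝ, Measurable (fun t => h t x))

/-- `h(t,x)` is Lipschitz in `x` on `U`. -/
def LipschitzInSnd (h : ℝ → ℝ → ℝ) (U : Set (ℝ × ℝ)) : Prop :=
  ∃ L > (0:ℝ), ∀ t x₁ x₂ : ℝ, (t, x₁) ∈ U → (t, x₂) ∈ U → |h t x₁ - h t x₂| ≤ L * |x₁ - x₂|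

/-- A solution on `[0,T]` of `k' = h(t,k)`, `k(0) = kbar`, with graph in `U`. -/
structure CaraSolOn (h : ℝ → ℝ → ℝ) (U : Set (ℝ × ℝ)) (kbar T : ℝ) (k : ℝ → ℝ) : Prop where
  ac : AbsContOn k 0 T
  init : k 0 = kbar
  graph : ∀ t ∈ Set.Icc (0:ℝ) T, (t, k t) ∈ U
  hasDeriv : ∀ᵐ t : ℝ, t ∈ Set.Icc (0:ℝ) T → HasDerivAt k (h t (k t)) t

/- ## The Ramsey–Cass–Koopmans specialization -/

def ur0 (u0 : ℝ → EReal) (c : ℝ) : ℝ := (u0 c).toReal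

/-- Assumption 2' on a one-variable utility function. -/
structure Assumption2' (u0 : ℝ → EReal) : Prop where
  ne_top : ∀ c : ℝ, u0 c ≠ ⊤
  cont : ContinuousOn u0 (Set.Ici 0)
  concave : ∀ c₁ c₂ t : ℝ, 0 ≤ c₁ → 0 ≤ c₂ → 0 ≤ t → t ≤ 1 →
    ((1 - t : ℝ) : EReal) * u0 c₁ + (t : EReal) * u0 c₂ ≤ u0 ((1 - t) * c₁ + t * c₂)
  strictMono : ∀ c₁ c₂ : ℝ, 0 ≤ c₁ → c₁ < c₂ → u0 c₁ < u0 c₂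
  ne_bot_pos : ∀ c : ℝ, 0 < c → u0 c ≠ ⊥
  smooth : ContDiffOn ℝ 1 (ur0 u0) (Set.Ioi 0)
  anti : ∀ c₁ c₂ : ℝ, 0 < c₁ → c₁ < c₂ → deriv (ur0 u0) c₂ < deriv (ur0 u0) c₁
  tendsto_zero : Tendsto (fun c => deriv (ur0 u0) c) (𝓝[>] (0:ℝ)) atTop
  tendsto_top : Tendsto (fun c => deriv (ur0 u0) c) atTop (𝓝 0)

/-- Assumption 3' on a production function `f` and the depreciation rate `d`. -/
structure Assumption3' (f : ℝ → ℝ) (d : ℝ) : Prop where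
  nonneg : ∀ k : ℝ, 0 ≤ k → 0 ≤ f k
  cont : ContinuousOn f (Set.Ici 0)
  concave : ConcaveOn ℝ (Set.Ici 0) f
  strictMono : StrictMonoOn f (Set.Ici 0)
  zero : f 0 = 0
  d_nonneg : 0 ≤ d
  productive : ∃ k > (0:ℝ), d * k < f k

/-- The Inada condition. -/
def InadaCondition (f : ℝ → ℝ) : Prop :=
  (∀ k : ℝ, 0 < k → DifferentiableAt ℝ f k) ∧ ContinuousOn (deriv f) (Set.Ioi 0) ∧
  StrictConcaveOn ℝ (Set.Ici 0) f ∧ deriv f '' Set.Ioi 0 = Set.Ioi 0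

/-- The utility function of the RCK model, as a function of `(c, k)`. -/
def rckU (u0 : ℝ → EReal) : ℝ → ℝ → EReal := fun c _ => u0 c

/-- The technology function of the RCK model. -/
def rckF (f : ℝ → ℝ) (d : ℝ) : ℝ → ℝ → ℝ := fun k c => f k - d * k - c

/-!
Concavity of `F(·, 0)` gives `F(k, 0) ≤ β k + A` with `β = max γ 0 < ρ`, so by Grönwall the pure
accumulation path grows at most like `(k̄ + A T) e^{β T}`; and since `F(·, 0) ≥ 0` on some
`[0, k']`, the path never drops below `min k̄ k'`. An increasing concave `V` is bounded above by an
affine function and below by its value at that floor, which squeezes `e^{-ρT} V(k⁺(T, k̄))` to `0`.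
Both comparison arguments for the a.e. ODE rest on the fundamental theorem of calculus for
absolutely continuous functions.
-/

theorem AbsContOn.absolutelyContinuousOnInterval {f : ℝ → ℝ} {a b : ℝ} (hab : a ≤ b)
    (hf : AbsContOn f a b) : AbsolutelyContinuousOnInterval f a b := by
  rw [absolutelyContinuousOnInterval_iff]
  intro ε hε
  obtain ⟨δ, hδ, hfδ⟩ := hf ε hε
  refine ⟨δ, hδ, fun ⟨n, I⟩ ⟨hI, hdisj⟩ hlen => ?_⟩
  rw [uIcc_of_le hab] at hI
  let s : Fin n → ℝ := fun i => min (I i).1 (I i).2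
  let t : Fin n → ℝ := fun i => max (I i).1 (I i).2
  have hmem : ∀ i : Fin n, i.val ∈ Finset.range n := fun i => Finset.mem_range.2 i.isLt
  have hswap (x y : ℝ) : |f (max x y) - f (min x y)| = |f x - f y| := by
    rcases le_total x y with h | h
    · rw [max_eq_right h, min_eq_left h, abs_sub_comm]
    · rw [max_eq_left h, min_eq_right h]
  have hsum := hfδ n s t
    (fun i => ⟨le_min (hI i (hmem i)).1.1 (hI i (hmem i)).2.1, min_le_max,
      max_le (hI i (hmem i)).1.2 (hI i (hmem i)).2.2⟩)
    (fun i j hij => (hdisj (hmem i) (hmem j) (Fin.val_injective.ne hij)).mono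
      Ioo_subset_Ioc_self Ioo_subset_Ioc_self)
    (by simpa only [Finset.sum_range, Real.dist_eq, abs_sub_comm, s, t, max_sub_min_eq_abs]
      using hlen)
  simpa only [Finset.sum_range, Real.dist_eq, s, t, hswap] using hsum

theorem AbsolutelyContinuousOnInterval.sub_le_mul_of_ae_deriv_le {f : ℝ → ℝ} {a b M : ℝ}
    (hf : AbsolutelyContinuousOnInterval f a b) (hab : a ≤ b)
    (hM : ∀ᵐ t, t ∈ Ioo a b → deriv f t ≤ M) : f b - f a ≤ M * (b - a) := by
  rw [← hf.integral_deriv_eq_sub, mul_comm, ← smul_eq_mul, ← intervalIntegral.integral_const]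
  refine intervalIntegral.integral_mono_ae_restrict hab hf.intervalIntegrable_deriv
    intervalIntegrable_const ?_
  rwa [EventuallyLE, ← Measure.restrict_congr_set Ioo_ae_eq_Icc, ae_restrict_iff' measurableSet_Ioo]

namespace SolvesODEOn

variable {h : ℝ → ℝ} {kbar : ℝ} {k : ℝ → ℝ}

theorem absolutelyContinuousOnInterval (hk : SolvesODEOn h kbar k (Ici 0)) {a b : ℝ}
    (ha : 0 ≤ a) (hb : 0 ≤ b) : AbsolutelyContinuousOnInterval k a b := by
  have hc : 0 < max a b + 1 := by positivity
  refine ((hk.locAC 0 _ self_mem_Ici hc.le hc).absolutelyContinuousOnInterval hc.le).mono ?_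
  rw [uIcc_of_le hc.le]
  exact uIcc_subset_Icc ⟨ha, by linarith [le_max_left a b]⟩ ⟨hb, by linarith [le_max_right a b]⟩

theorem le_add_mul_mul_exp (hk : SolvesODEOn h kbar k (Ici 0)) {β A : ℝ} (hβ : 0 ≤ β)
    (hA : 0 ≤ A) (hh : ∀ x > 0, h x ≤ β * x + A) {T : ℝ} (hT : 0 ≤ T) :
    k T ≤ (kbar + A * T) * exp (β * T) := by
  let g : ℝ → ℝ := fun t => exp (-β * t) * k t
  have hg : AbsolutelyContinuousOnInterval g 0 T :=
    ((contDiff_const.mul contDiff_id).exp.contDiffOn.absolutelyContinuousOnInterval).mul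
      (hk.absolutelyContinuousOnInterval le_rfl hT)
  have hg' : ∀ᵐ t, t ∈ Ioo 0 T → deriv g t ≤ A := by
    filter_upwards [hk.hasDeriv] with t hkt ht
    have ht0 : 0 ≤ t := ht.1.le
    have hgt : HasDerivAt g (exp (-β * t) * (h (k t) - β * k t)) t := by
      have he : HasDerivAt (fun t => exp (-β * t)) (exp (-β * t) * -β) t := by
        simpa using ((hasDerivAt_id t).const_mul (-β)).exp
      exact (he.mul (hkt ht0)).congr_deriv (by ring)
    rw [hgt.deriv]
    calc exp (-β * t) * (h (k t) - β * k t) ≤ exp (-β * t) * A := by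
          gcongr; linarith [hh (k t) (hk.pos t ht0)]
      _ ≤ A := mul_le_of_le_one_left hA (exp_le_one_iff.2 (by nlinarith))
  have hgT : exp (-β * T) * k T ≤ kbar + A * T := by
    have := hg.sub_le_mul_of_ae_deriv_le hT hg'
    simp only [g, mul_zero, exp_zero, one_mul, hk.init, sub_zero] at this
    linarith
  calc k T = exp (-β * T) * k T * exp (β * T) := by
        rw [mul_right_comm, ← exp_add, neg_mul, neg_add_cancel, exp_zero, one_mul]
    _ ≤ (kbar + A * T) * exp (β * T) := by gcongr

theorem le_of_nonneg_below (hk : SolvesODEOn h kbar k (Ici 0)) {m : ℝ} (hm : m ≤ kbar)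
    (hh : ∀ x, 0 < x → x < m → 0 ≤ h x) {T : ℝ} (hT : 0 ≤ T) : m ≤ k T := by
  by_contra! hTm
  -- `τ` is the last time in `[0, T]` with `m ≤ k τ`; on `(τ, T]` the path stays below `m`,
  -- where `h ≥ 0` makes it nondecreasing.
  let C := Icc 0 T ∩ k ⁻¹' Ici m
  have hcont : ContinuousOn k (Icc 0 T) := by
    simpa only [uIcc_of_le hT] using (hk.absolutelyContinuousOnInterval le_rfl hT).continuousOn
  have hCbdd : BddAbove C := ⟨T, fun t ht => ht.1.2⟩
  have hτ : sSup C ∈ C := (hcont.preimage_isClosed_of_isClosed isClosed_Icc isClosed_Ici).csSup_mem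
    ⟨0, ⟨le_rfl, hT⟩, (hk.init.symm ▸ hm : m ≤ k 0)⟩ hCbdd
  set τ := sSup C
  have hτT : τ < T := lt_of_le_of_ne hτ.1.2 fun hτT => hTm.not_ge (hτT ▸ hτ.2)
  have hbelow : ∀ t ∈ Ioc τ T, k t < m := fun t ht => by
    by_contra! hmt
    exact (le_csSup hCbdd ⟨⟨hτ.1.1.trans ht.1.le, ht.2⟩, hmt⟩).not_gt ht.1
  have hderiv : ∀ᵐ t, t ∈ Ioo τ T → deriv (-k) t ≤ 0 := by
    filter_upwards [hk.hasDeriv] with t hkt ht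
    have ht0 : 0 ≤ t := hτ.1.1.trans ht.1.le
    rw [(hkt ht0).neg.deriv, neg_nonpos]
    exact hh _ (hk.pos t ht0) (hbelow t ⟨ht.1, ht.2.le⟩)
  have hincr : (-k) T - (-k) τ ≤ 0 * (T - τ) :=
    (hk.absolutelyContinuousOnInterval hτ.1.1 hT).neg.sub_le_mul_of_ae_deriv_le hτT.le hderiv
  simp only [Pi.neg_apply, zero_mul] at hincr
  have hmτ : m ≤ k τ := hτ.2
  linarith

end SolvesODEOn

theorem ConcaveOn.le_add_mul_of_monotoneOn {V : ℝ → ℝ} (hV : ConcaveOn ℝ (Ioi 0) V)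
    (hmono : MonotoneOn V (Ioi 0)) {x : ℝ} (hx : 0 < x) : V x ≤ V 2 + (V 2 - V 1) * x := by
  have hs : 0 ≤ V 2 - V 1 := sub_nonneg.2 (hmono (by norm_num) (by norm_num) (by norm_num))
  rcases le_or_gt x 2 with hx2 | hx2
  · nlinarith [hmono hx (show (2 : ℝ) ∈ Ioi 0 by norm_num) hx2]
  · have hslope := hV.slope_anti_adjacent (show (1 : ℝ) ∈ Ioi 0 by norm_num) hx one_lt_two hx2
    rw [div_le_iff₀ (by linarith), show (2 : ℝ) - 1 = 1 by norm_num, div_one] at hslope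
    nlinarith

theorem tendsto_add_mul_mul_exp_atTop_nhds_zero {c : ℝ} (hc : c < 0) (a b : ℝ) :
    Tendsto (fun T => (a + b * T) * exp (c * T)) atTop (𝓝 0) := by
  have hlin : Tendsto (fun T => -c * T) atTop atTop := tendsto_id.const_mul_atTop (neg_pos.2 hc)
  have hexp : Tendsto (fun T => exp (c * T)) atTop (𝓝 0) :=
    tendsto_exp_atBot.comp (tendsto_id.const_mul_atTop_of_neg hc)
  have hmul : Tendsto (fun T => T * exp (c * T)) atTop (𝓝 0) := by
    have := ((tendsto_pow_mul_exp_neg_atTop_nhds_zero 1).comp hlin).const_mul (-c)⁻¹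
    simp only [mul_zero] at this
    refine this.congr fun T => ?_
    simp only [Function.comp_apply, pow_one, neg_mul, neg_neg]
    field_simp [hc.ne]
  simpa [add_mul, mul_assoc] using (hexp.const_mul a).add (hmul.const_mul b)

theorem ConcaveOn.tendsto_exp_neg_mul_mul_comp_atTop {V k : ℝ → ℝ} {ρ β m a b : ℝ}
    (hV : ConcaveOn ℝ (Ioi 0) V) (hmono : MonotoneOn V (Ioi 0)) (hρ : 0 < ρ) (hβρ : β < ρ)
    (hm : 0 < m) (hlow : ∀ T ≥ 0, m ≤ k T) (hup : ∀ T ≥ 0, k T ≤ (a + b * T) * exp (β * T)) :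
    Tendsto (fun T => exp (-ρ * T) * V (k T)) atTop (𝓝 0) := by
  have hlim_low := tendsto_add_mul_mul_exp_atTop_nhds_zero (neg_lt_zero.2 hρ) (V m) 0
  have hlim_up := (tendsto_add_mul_mul_exp_atTop_nhds_zero (neg_lt_zero.2 hρ) (V 2) 0).add
    ((tendsto_add_mul_mul_exp_atTop_nhds_zero (sub_neg.2 hβρ) a b).const_mul (V 2 - V 1))
  rw [mul_zero, add_zero] at hlim_up
  refine tendsto_of_tendsto_of_tendsto_of_le_of_le' hlim_low hlim_up ?_ ?_ <;>
    filter_upwards [eventually_ge_atTop 0] with T hT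
  · rw [zero_mul, add_zero, mul_comm]
    exact mul_le_mul_of_nonneg_left (hmono hm (hm.trans_le (hlow T hT)) (hlow T hT)) (exp_pos _).le
  · have hs : 0 ≤ V 2 - V 1 := sub_nonneg.2 (hmono (by norm_num) (by norm_num) (by norm_num))
    have hkT := hV.le_add_mul_of_monotoneOn hmono (hm.trans_le (hlow T hT))
    calc exp (-ρ * T) * V (k T)
        ≤ exp (-ρ * T) * (V 2 + (V 2 - V 1) * ((a + b * T) * exp (β * T))) := by
          gcongr; exact hkT.trans (by gcongr; exact hup T hT)
      _ = (V 2 + 0 * T) * exp (-ρ * T) + (V 2 - V 1) * ((a + b * T) * exp ((β - ρ) * T)) := by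
          rw [show (β - ρ) * T = β * T + -ρ * T by ring, exp_add]; ring

theorem le_max_mul_add_abs_of_mem_subdiffOn {G : ℝ → ℝ} {x γ y : ℝ}
    (hγ : γ ∈ subdiffOn G (Ici 0) x) (hy : 0 ≤ y) : G y ≤ max γ 0 * y + |G x - γ * x| := by
  have hsup := hγ y hy
  have hγy : γ * y ≤ max γ 0 * y := mul_le_mul_of_nonneg_right (le_max_left γ 0) hy
  linarith [le_abs_self (G x - γ * x)]

namespace Assumption3

variable {W : Set (ℝ → ℝ)} {F : ℝ → ℝ → ℝ}

theorem concaveOn_zeroConsumption (hA3 : Assumption3 W F) : ConcaveOn ℝ (Ici 0) fun k => F k 0 := by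
  have hpre : LinearMap.inl ℝ ℝ ℝ ⁻¹' posOrth = Ici 0 := by
    ext k
    simp [posOrth]
  exact hpre ▸ hA3.concave.comp_linearMap (LinearMap.inl ℝ ℝ ℝ)

theorem exists_pos_forall_Icc_nonneg (hA3 : Assumption3 W F) :
    ∃ k' > 0, ∀ x ∈ Icc 0 k', 0 ≤ F x 0 := by
  obtain ⟨k', hk', hFk'⟩ := hA3.productive 0 le_rfl
  refine ⟨k', hk', fun x hx => ?_⟩
  have := hA3.concaveOn_zeroConsumption.ge_on_segment self_mem_Ici hk'.le
    (by rwa [segment_eq_Icc hk'.le])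
  rw [hA3.zero] at hFk' this
  simpa [hFk'.le] using this

end Assumption3

/-- **Lemma 2.** If `γ ∈ ∂ₖF(k,0)` for some `k > 0` with `γ < ρ`, then `𝒱` coincides with the
set of all increasing concave real-valued functions on `ℝ₊₊`. -/
theorem growth_condition_automatic (ρ : ℝ) (W : Set (ℝ → ℝ)) (F : ℝ → ℝ → ℝ)
    (hρ : 0 < ρ) (hA3 : Assumption3 W F)
    (hγ : ∃ k : ℝ, 0 < k ∧ ∃ γ ∈ subdiffOn (fun x => F x 0) (Set.Ici 0) k, γ < ρ) :
    ∀ V : ℝ → ℝ,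
      memV ρ F V ↔ StrictMonoOn V (Set.Ioi 0) ∧ ConcaveOn ℝ (Set.Ioi 0) V := by
  intro V
  refine ⟨fun hV => ⟨hV.1, hV.2.1⟩, fun ⟨hmono, hconc⟩ => ⟨hmono, hconc, ?_⟩⟩
  intro kbar hkbar kp hkp
  obtain ⟨k₀, -, γ, hγ, hγρ⟩ := hγ
  obtain ⟨k', hk', hFnonneg⟩ := hA3.exists_pos_forall_Icc_nonneg
  refine hconc.tendsto_exp_neg_mul_mul_comp_atTop (a := kbar) (b := |F k₀ 0 - γ * k₀|)
    hmono.monotoneOn hρ (max_lt hγρ hρ) (lt_min hkbar hk') (fun T hT => ?_) (fun T hT => ?_)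
  · refine SolvesODEOn.le_of_nonneg_below hkp (min_le_left _ _) (fun x hx hxm => ?_) hT
    exact hFnonneg x ⟨hx.le, hxm.le.trans (min_le_right _ _)⟩
  · exact SolvesODEOn.le_add_mul_mul_exp hkp (le_max_right _ _) (abs_nonneg _)
      (fun x hx => le_max_mul_add_abs_of_mem_subdiffOn hγ hx.le) hT

end
end

section
/- Suppose Assumptions 1-4 hold. Then there exists a positive continuous function c*(p,k) defined on ℝ₊₊² such that for all (p,k) ∈ ℝ₊₊², F(k,c*(p,k))·p + u(c*(p,k),k) = sup_{c≥0}{F(k,c)·p + u(c,k)}. -/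
open MeasureTheory Real Set Filter Topology
open scoped ENNReal NNReal

noncomputable section

/-!
For `p, k > 0` the objective `c ↦ F(k,c)p + u(c,k)` is strictly concave on `(0,∞)`: `F(k,·)` is
concave and `∂u/∂c` is strictly decreasing. As `∂u/∂c → ∞` at `0` and `→ 0` at `∞`, while the
secant slopes of `F(k,·)` are at least `slope (F k) 1 2` on `[0,1]` and at most this negative
number beyond `2`, the objective increases on some `[a,a']` and decreases on some `[b,b']`.
Concavity confines every maximizer to `[a,b']`, which gives existence by compactness; strict
concavity gives uniqueness. The two strict inequalities survive small changes of `(p,k)`, so near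
`(p₀,k₀)` the maximizer stays in one compact interval, and each of its cluster points maximizes
the objective at `(p₀,k₀)`, hence is the maximizer there. At `c = 0`, where `u` may be `-∞`, the
value is a limit of values at `c > 0` by continuity of `u` and `F` on the closed orthant.
-/

theorem ConcaveOn.slope_le_slope_of_le_of_le {s : Set ℝ} {f : ℝ → ℝ} (hf : ConcaveOn ℝ s f)
    {x y x' y' : ℝ} (hx : x ∈ s) (hy : y ∈ s) (hx' : x' ∈ s) (hy' : y' ∈ s) (hxy : x < y)
    (hxy' : x' < y') (hxx' : x ≤ x') (hyy' : y ≤ y') : slope f x' y' ≤ slope f x y :=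
  calc slope f x' y' = slope f y' x' := slope_comm f x' y'
    _ ≤ slope f y' x :=
      hf.slope_anti hy' ⟨hx, (hxy.trans_le hyy').ne⟩ ⟨hx', hxy'.ne⟩ hxx'
    _ = slope f x y' := slope_comm f y' x
    _ ≤ slope f x y := hf.slope_anti hx ⟨hy, hxy.ne'⟩ ⟨hy', (hxy.trans_le hyy').ne'⟩ hyy'

section Bracket

variable {s : Set ℝ} {g : ℝ → ℝ} {a a' b b' : ℝ}

theorem ConcaveOn.exists_lt_of_notMem_Icc (hg : ConcaveOn ℝ s g) (ha : a ∈ s) (hb' : b' ∈ s)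
    (haa' : a < a') (ha'b : a' ≤ b) (hbb' : b < b') (hga : g a < g a') (hgb : g b' < g b)
    {y : ℝ} (hy : y ∈ s) (hyab : y ∉ Icc a b') : ∃ z ∈ Icc a b', g y < g z := by
  have hIcc : Icc a b' ⊆ s := hg.1.ordConnected.out ha hb'
  have hab' : a ≤ b' := haa'.le.trans (ha'b.trans hbb'.le)
  rcases lt_or_ge y a with hya | hay
  · have ha' : a' ∈ s := hIcc ⟨haa'.le, ha'b.trans hbb'.le⟩
    exact ⟨a, left_mem_Icc.2 hab', hg.strictMonoOn ha' haa' hga ⟨hy, hya.le⟩ ⟨ha, le_refl a⟩ hya⟩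
  · have hby : b' < y := lt_of_not_ge fun hyb => hyab ⟨hay, hyb⟩
    have hb : b ∈ s := hIcc ⟨haa'.le.trans ha'b, hbb'.le⟩
    exact ⟨b', right_mem_Icc.2 hab',
      hg.strictAntiOn hb hbb' hgb ⟨hb', le_refl b'⟩ ⟨hy, hby.le⟩ hby⟩

theorem ConcaveOn.mem_Icc_of_isMaxOn (hg : ConcaveOn ℝ s g) (ha : a ∈ s) (hb' : b' ∈ s)
    (haa' : a < a') (ha'b : a' ≤ b) (hbb' : b < b') (hga : g a < g a') (hgb : g b' < g b)
    {x : ℝ} (hx : x ∈ s) (hmax : IsMaxOn g s x) : x ∈ Icc a b' := by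
  by_contra hxab
  obtain ⟨z, hz, hxz⟩ := hg.exists_lt_of_notMem_Icc ha hb' haa' ha'b hbb' hga hgb hx hxab
  exact hxz.not_ge (hmax (hg.1.ordConnected.out ha hb' hz))

theorem ConcaveOn.exists_isMaxOn (hg : ConcaveOn ℝ s g) (hcont : ContinuousOn g s)
    (ha : a ∈ s) (hb' : b' ∈ s) (haa' : a < a') (ha'b : a' ≤ b) (hbb' : b < b')
    (hga : g a < g a') (hgb : g b' < g b) : ∃ x ∈ s, IsMaxOn g s x := by
  have hIcc : Icc a b' ⊆ s := hg.1.ordConnected.out ha hb'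
  obtain ⟨x, hx, hxmax⟩ := isCompact_Icc.exists_isMaxOn
    (nonempty_Icc.2 (haa'.le.trans (ha'b.trans hbb'.le))) (hcont.mono hIcc)
  refine ⟨x, hIcc hx, fun y hy => ?_⟩
  by_cases hyab : y ∈ Icc a b'
  · exact hxmax hyab
  · obtain ⟨z, hz, hyz⟩ := hg.exists_lt_of_notMem_Icc ha hb' haa' ha'b hbb' hga hgb hy hyab
    exact hyz.le.trans (hxmax hz)

end Bracket

/-- Berge's maximum theorem for a unique maximizer: by joint continuity of `G`, every cluster
point of `f` at `x₀` maximizes `G x₀`. -/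
theorem tendsto_of_isMaxOn_of_unique {X Y : Type*} [TopologicalSpace X] [TopologicalSpace Y]
    {G : X → Y → ℝ} {f : X → Y} {x₀ : X} {K S : Set Y} (hK : IsCompact K) (hKS : K ⊆ S)
    (hfK : ∀ᶠ x in 𝓝 x₀, f x ∈ K) (hmax : ∀ᶠ x in 𝓝 x₀, IsMaxOn (G x) S (f x))
    (hG : ∀ y ∈ S, ContinuousAt (Function.uncurry G) (x₀, y))
    (huniq : ∀ y ∈ K, IsMaxOn (G x₀) S y → y = f x₀) :
    Tendsto f (𝓝 x₀) (𝓝 (f x₀)) := by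
  refine hK.tendsto_nhds_of_unique_mapClusterPt hfK fun y hyK hy => huniq y hyK fun z hz => ?_
  by_contra hle
  have hlt : G x₀ y < G x₀ z := lt_of_not_ge hle
  obtain ⟨r, hyr, hrz⟩ := exists_between hlt
  have hz_near : ∀ᶠ x in 𝓝 x₀, r < G x z :=
    ((hG z hz).tendsto.comp (tendsto_id.prodMk_nhds tendsto_const_nhds)).eventually_const_lt hrz
  have hy_near : ∀ᶠ q in 𝓝 (x₀, y), Function.uncurry G q < r :=
    (hG y (hKS hyK)).tendsto.eventually_lt_const hyr
  rw [nhds_prod_eq, eventually_prod_iff] at hy_near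
  obtain ⟨P, hP, Q, hQ, hPQ⟩ := hy_near
  obtain ⟨x, hxQ, hxP, hxz, hxmax⟩ :=
    ((hy.frequently hQ).and_eventually (hP.and (hz_near.and hmax))).exists
  exact (hPQ hxP hxQ).not_gt (hxz.trans_le (hxmax hz))

theorem isOpen_posOrthOpen : IsOpen posOrthOpen :=
  (isOpen_lt continuous_const continuous_fst).inter (isOpen_lt continuous_const continuous_snd)

section Hamiltonian

variable {u : ℝ → ℝ → EReal} {W : Set (ℝ → ℝ)} {F : ℝ → ℝ → ℝ} {p k : ℝ}

/-- Since `ur` is `EReal.toReal ∘ u`, this is `F(k,c)p + u(c,k)` only where `u` is finite,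
e.g. for `c, k > 0`. -/
def hamObjective (u : ℝ → ℝ → EReal) (F : ℝ → ℝ → ℝ) (p k c : ℝ) : ℝ := F k c * p + ur u c k

theorem coe_ur (hA2 : Assumption2 u) {c : ℝ} (hc : 0 < c) (hk : 0 < k) :
    ((ur u c k : ℝ) : EReal) = u c k :=
  EReal.coe_toReal (hA2.ne_top c k) (hA2.ne_bot_pos c k hc hk)

theorem continuousOn_hamObjective (hA2 : Assumption2 u) (hA3 : Assumption3 W F) :
    ContinuousOn (fun x : (ℝ × ℝ) × ℝ => hamObjective u F x.1.1 x.1.2 x.2)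
      (posOrthOpen ×ˢ Ioi 0) := by
  refine ContinuousOn.add (ContinuousOn.mul ?_ (by fun_prop)) ?_
  · exact hA3.cont.comp (continuous_fst.snd.prodMk continuous_snd).continuousOn
      fun x (hx : x ∈ posOrthOpen ×ˢ Ioi 0) => ⟨hx.1.2.le, le_of_lt hx.2⟩
  · exact hA2.smooth.continuousOn.comp (continuous_snd.prodMk continuous_fst.snd).continuousOn
      fun x (hx : x ∈ posOrthOpen ×ˢ Ioi 0) => ⟨hx.2, hx.1.2⟩

theorem continuousAt_hamObjective (hA2 : Assumption2 u) (hA3 : Assumption3 W F)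
    {q : ℝ × ℝ} (hq : q ∈ posOrthOpen) {c : ℝ} (hc : 0 < c) :
    ContinuousAt (fun x : (ℝ × ℝ) × ℝ => hamObjective u F x.1.1 x.1.2 x.2) (q, c) :=
  (continuousOn_hamObjective hA2 hA3).continuousAt
    ((isOpen_posOrthOpen.prod isOpen_Ioi).mem_nhds ⟨hq, hc⟩)

theorem hasDerivAt_ur (hA2 : Assumption2 u) {c : ℝ} (hc : 0 < c) (hk : 0 < k) :
    HasDerivAt (fun c' => ur u c' k) (ucDeriv u c k) c := by
  have hd : DifferentiableAt ℝ (fun q : ℝ × ℝ => ur u q.1 q.2) (c, k) :=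
    (hA2.smooth.differentiableOn one_ne_zero).differentiableAt
      (isOpen_posOrthOpen.mem_nhds ⟨hc, hk⟩)
  exact (hd.comp c (by fun_prop : DifferentiableAt ℝ (fun c' : ℝ => (c', k)) c)).hasDerivAt

theorem strictConcaveOn_ur (hA2 : Assumption2 u) (hA4 : Assumption4 u) (hk : 0 < k) :
    StrictConcaveOn ℝ (Ioi 0) (fun c => ur u c k) := by
  refine StrictAntiOn.strictConcaveOn_of_deriv (convex_Ioi 0) ?_ ?_
  · exact fun c hc => (hasDerivAt_ur hA2 hc hk).continuousAt.continuousWithinAt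
  · rw [interior_Ioi]
    exact fun a ha b _ hab => hA4.anti k a b hk ha hab

theorem concaveOn_F (hA3 : Assumption3 W F) (hk : 0 ≤ k) : ConcaveOn ℝ (Ici 0) (F k) := by
  refine ⟨convex_Ici 0, fun c₁ hc₁ c₂ hc₂ a b ha hb hab => ?_⟩
  have h := hA3.concave.2 (x := (k, c₁)) ⟨hk, hc₁⟩ (y := (k, c₂)) ⟨hk, hc₂⟩ ha hb hab
  have hkk : a * k + b * k = k := by rw [← add_mul, hab, one_mul]
  simpa [hkk] using h

theorem strictConcaveOn_hamObjective (hA2 : Assumption2 u) (hA3 : Assumption3 W F)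
    (hA4 : Assumption4 u) (hp : 0 ≤ p) (hk : 0 < k) :
    StrictConcaveOn ℝ (Ioi 0) (hamObjective u F p k) := by
  have hF : ConcaveOn ℝ (Ioi 0) (fun c => F k c * p) := by
    simpa [smul_eq_mul, mul_comm] using
      ((concaveOn_F hA3 hk.le).subset Ioi_subset_Ici_self (convex_Ioi 0)).smul hp
  exact hF.add_strictConcaveOn (strictConcaveOn_ur hA2 hA4 hk)

theorem slope_hamObjective (a b : ℝ) :
    slope (hamObjective u F p k) a b = slope (F k) a b * p + slope (fun c => ur u c k) a b := by
  simp only [slope_def_field, hamObjective]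
  ring

theorem exists_hamObjective_lt_near_zero (hA2 : Assumption2 u) (hA3 : Assumption3 W F)
    (hA4 : Assumption4 u) (hp : 0 ≤ p) (hk : 0 < k) :
    ∃ a a' : ℝ, 0 < a ∧ a < a' ∧ a' ≤ 1 ∧
      hamObjective u F p k a < hamObjective u F p k a' := by
  obtain ⟨a', hlarge, ha'⟩ := (((hA4.tendsto_zero k hk).eventually_gt_atTop
    (-(slope (F k) 1 2 * p))).and (Ioo_mem_nhdsGT (one_pos : (0:ℝ) < 1))).exists
  have ha : 0 < a' / 2 := half_pos ha'.1
  have haa' : a' / 2 < a' := half_lt_self ha'.1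
  have hF : slope (F k) 1 2 ≤ slope (F k) (a' / 2) a' :=
    (concaveOn_F hA3 hk.le).slope_le_slope_of_le_of_le ha.le ha'.1.le (mem_Ici.2 zero_le_one)
      (mem_Ici.2 zero_le_two) haa' one_lt_two (by linarith [ha'.2]) (by linarith [ha'.2])
  have hu : ucDeriv u a' k ≤ slope (fun c => ur u c k) (a' / 2) a' :=
    (strictConcaveOn_ur hA2 hA4 hk).concaveOn.le_slope_of_hasDerivAt ha ha'.1 haa'
      (hasDerivAt_ur hA2 ha'.1 hk)
  refine ⟨a' / 2, a', ha, haa', ha'.2.le, (slope_pos_iff_of_le haa'.le).1 ?_⟩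
  rw [slope_hamObjective]
  linarith [mul_le_mul_of_nonneg_right hF hp]

theorem exists_hamObjective_lt_atTop (hA2 : Assumption2 u) (hA3 : Assumption3 W F)
    (hA4 : Assumption4 u) (hp : 0 < p) (hk : 0 < k) :
    ∃ b b' : ℝ, 2 ≤ b ∧ b < b' ∧ hamObjective u F p k b' < hamObjective u F p k b := by
  have hσ : slope (F k) 1 2 < 0 :=
    (slope_neg_iff_of_le one_le_two).2 (hA3.anti_c k 1 2 hk.le zero_le_one one_lt_two)
  obtain ⟨b, hsmall, hb⟩ := (((hA4.tendsto_top k hk).eventually_lt_const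
    (neg_pos.2 (mul_neg_of_neg_of_pos hσ hp))).and (eventually_ge_atTop 2)).exists
  have hb0 : 0 < b := by linarith
  have hbb : b < b + 1 := lt_add_one b
  have hF : slope (F k) b (b + 1) ≤ slope (F k) 1 2 :=
    (concaveOn_F hA3 hk.le).slope_le_slope_of_le_of_le (mem_Ici.2 zero_le_one)
      (mem_Ici.2 zero_le_two) hb0.le (mem_Ici.2 (by linarith)) one_lt_two hbb (by linarith)
      (by linarith)
  have hu : slope (fun c => ur u c k) b (b + 1) ≤ ucDeriv u b k :=
    (strictConcaveOn_ur hA2 hA4 hk).concaveOn.slope_le_of_hasDerivAt hb0 (hb0.trans hbb) hbb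
      (hasDerivAt_ur hA2 hb0 hk)
  refine ⟨b, b + 1, hb, hbb, (slope_neg_iff_of_le hbb.le).1 ?_⟩
  rw [slope_hamObjective]
  linarith [mul_le_mul_of_nonneg_right hF hp.le]

theorem exists_hamObjective_bracket (hA2 : Assumption2 u) (hA3 : Assumption3 W F)
    (hA4 : Assumption4 u) (hp : 0 < p) (hk : 0 < k) :
    ∃ a a' b b' : ℝ, 0 < a ∧ a < a' ∧ a' ≤ b ∧ b < b' ∧
      hamObjective u F p k a < hamObjective u F p k a' ∧
      hamObjective u F p k b' < hamObjective u F p k b := by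
  obtain ⟨a, a', ha, haa', ha'1, hga⟩ := exists_hamObjective_lt_near_zero hA2 hA3 hA4 hp.le hk
  obtain ⟨b, b', hb2, hbb', hgb⟩ := exists_hamObjective_lt_atTop hA2 hA3 hA4 hp hk
  exact ⟨a, a', b, b', ha, haa', by linarith, hbb', hga, hgb⟩

theorem exists_isMaxOn_hamObjective (hA2 : Assumption2 u) (hA3 : Assumption3 W F)
    (hA4 : Assumption4 u) (hp : 0 < p) (hk : 0 < k) :
    ∃ c ∈ Ioi 0, IsMaxOn (hamObjective u F p k) (Ioi 0) c := by
  obtain ⟨a, a', b, b', ha, haa', ha'b, hbb', hga, hgb⟩ :=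
    exists_hamObjective_bracket hA2 hA3 hA4 hp hk
  exact (strictConcaveOn_hamObjective hA2 hA3 hA4 hp.le hk).concaveOn.exists_isMaxOn
    ((continuousOn_hamObjective hA2 hA3).comp (f := fun c : ℝ => ((p, k), c)) (by fun_prop)
      fun c hc => ⟨⟨hp, hk⟩, hc⟩)
    ha (by linarith : (0:ℝ) < b') haa' ha'b hbb' hga hgb

/-- An arbitrary value when `hamObjective u F p k` has no maximizer on `c > 0`. -/
def hamArgmax (u : ℝ → ℝ → EReal) (F : ℝ → ℝ → ℝ) (p k : ℝ) : ℝ :=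
  Classical.epsilon fun c => c ∈ Ioi 0 ∧ IsMaxOn (hamObjective u F p k) (Ioi 0) c

theorem hamArgmax_spec (hA2 : Assumption2 u) (hA3 : Assumption3 W F) (hA4 : Assumption4 u)
    (hp : 0 < p) (hk : 0 < k) :
    hamArgmax u F p k ∈ Ioi 0 ∧ IsMaxOn (hamObjective u F p k) (Ioi 0) (hamArgmax u F p k) :=
  Classical.epsilon_spec (exists_isMaxOn_hamObjective hA2 hA3 hA4 hp hk)

theorem continuousOn_hamArgmax (hA2 : Assumption2 u) (hA3 : Assumption3 W F)
    (hA4 : Assumption4 u) :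
    ContinuousOn (fun q : ℝ × ℝ => hamArgmax u F q.1 q.2) posOrthOpen := by
  intro q₀ hq₀
  obtain ⟨a, a', b, b', ha, haa', ha'b, hbb', hga, hgb⟩ :=
    exists_hamObjective_bracket hA2 hA3 hA4 hq₀.1 hq₀.2
  have hb' : 0 < b' := by linarith
  have htendsto {c : ℝ} (hc : 0 < c) :
      Tendsto (fun q : ℝ × ℝ => hamObjective u F q.1 q.2 c) (𝓝 q₀)
        (𝓝 (hamObjective u F q₀.1 q₀.2 c)) :=
    (continuousAt_hamObjective hA2 hA3 hq₀ hc).tendsto.comp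
      (tendsto_id.prodMk_nhds tendsto_const_nhds)
  have hnear : ∀ᶠ q in 𝓝 q₀, q ∈ posOrthOpen ∧
      hamObjective u F q.1 q.2 a < hamObjective u F q.1 q.2 a' ∧
      hamObjective u F q.1 q.2 b' < hamObjective u F q.1 q.2 b :=
    (isOpen_posOrthOpen.eventually_mem hq₀).and <|
      ((htendsto ha).eventually_lt (htendsto (ha.trans haa')) hga).and
        ((htendsto hb').eventually_lt (htendsto (by linarith)) hgb)
  refine ContinuousAt.continuousWithinAt <| tendsto_of_isMaxOn_of_unique
    (G := fun (q : ℝ × ℝ) c => hamObjective u F q.1 q.2 c) (isCompact_Icc (a := a) (b := b'))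
    (fun c hc => ha.trans_le hc.1) ?_ ?_ (fun c => continuousAt_hamObjective hA2 hA3 hq₀) ?_
  · filter_upwards [hnear] with q ⟨hq, hqa, hqb⟩
    obtain ⟨hpos, hmax⟩ := hamArgmax_spec hA2 hA3 hA4 hq.1 hq.2
    exact (strictConcaveOn_hamObjective hA2 hA3 hA4 hq.1.le hq.2).concaveOn.mem_Icc_of_isMaxOn
      ha hb' haa' ha'b hbb' hqa hqb hpos hmax
  · filter_upwards [hnear] with q hq
    exact (hamArgmax_spec hA2 hA3 hA4 hq.1.1 hq.1.2).2
  · intro c hc hmax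
    obtain ⟨hpos, hmax₀⟩ := hamArgmax_spec hA2 hA3 hA4 hq₀.1 hq₀.2
    exact (strictConcaveOn_hamObjective hA2 hA3 hA4 hq₀.1.le hq₀.2).eq_of_isMaxOn hmax hmax₀
      (ha.trans_le hc.1) hpos

theorem tendsto_F_mul_add_u_nhdsGT_zero (hA2 : Assumption2 u) (hA3 : Assumption3 W F) (hk : 0 < k) :
    Tendsto (fun c => ((F k c * p : ℝ) : EReal) + u c k) (𝓝[>] 0)
      (𝓝 (((F k 0 * p : ℝ) : EReal) + u 0 k)) := by
  have hk0 : Tendsto (fun c : ℝ => (k, c)) (𝓝[>] 0) (𝓝[posOrth] (k, 0)) :=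
    tendsto_nhdsWithin_iff.2 ⟨((continuous_const.prodMk continuous_id).tendsto 0).mono_left
      nhdsWithin_le_nhds, eventually_nhdsWithin_of_forall fun c hc => ⟨hk.le, le_of_lt hc⟩⟩
  have h0k : Tendsto (fun c : ℝ => (c, k)) (𝓝[>] 0) (𝓝[posOrth] (0, k)) :=
    tendsto_nhdsWithin_iff.2 ⟨((continuous_id.prodMk continuous_const).tendsto 0).mono_left
      nhdsWithin_le_nhds, eventually_nhdsWithin_of_forall fun c hc => ⟨le_of_lt hc, hk.le⟩⟩
  have hF : Tendsto (fun c => F k c) (𝓝[>] 0) (𝓝 (F k 0)) :=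
    (hA3.cont (k, 0) ⟨hk.le, le_rfl⟩).tendsto.comp hk0
  have hu : Tendsto (fun c => u c k) (𝓝[>] 0) (𝓝 (u 0 k)) :=
    (hA2.cont (0, k) ⟨le_rfl, hk.le⟩).tendsto.comp h0k
  have hFp :
      Tendsto (fun c => ((F k c * p : ℝ) : EReal)) (𝓝[>] 0) (𝓝 ((F k 0 * p : ℝ) : EReal)) :=
    EReal.tendsto_coe.2 (hF.mul_const p)
  have hadd := EReal.continuousAt_add (p := (((F k 0 * p : ℝ) : EReal), u 0 k))
    (Or.inl (EReal.coe_ne_top _)) (Or.inl (EReal.coe_ne_bot _))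
  exact hadd.tendsto.comp (hFp.prodMk_nhds hu)

theorem eq_ham_of_isMaxOn (hA2 : Assumption2 u) (hA3 : Assumption3 W F) (hk : 0 < k)
    {c : ℝ} (hc : 0 < c) (hmax : IsMaxOn (hamObjective u F p k) (Ioi 0) c) :
    ((F k c * p : ℝ) : EReal) + u c k = Ham u F k p := by
  have hcoe {c : ℝ} (hc : 0 < c) :
      ((F k c * p : ℝ) : EReal) + u c k = (hamObjective u F p k c : EReal) := by
    rw [hamObjective, EReal.coe_add, coe_ur hA2 hc hk]
  refine le_antisymm
    (le_iSup (fun c : {c : ℝ // 0 ≤ c} => ((F k c.1 * p : ℝ) : EReal) + u c.1 k) ⟨c, hc.le⟩)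
    (iSup_le fun ⟨c', hc'⟩ => ?_)
  show ((F k c' * p : ℝ) : EReal) + u c' k ≤ _
  rw [hcoe hc]
  rcases hc'.eq_or_lt with rfl | hc'
  · refine le_of_tendsto (tendsto_F_mul_add_u_nhdsGT_zero hA2 hA3 hk) ?_
    filter_upwards [self_mem_nhdsWithin] with c' hc'
    rw [hcoe hc']
    exact EReal.coe_le_coe_iff.2 (hmax hc')
  · rw [hcoe hc']
    exact EReal.coe_le_coe_iff.2 (hmax hc')

end Hamiltonian

theorem exists_max_selection_general (W : Set (ℝ → ℝ)) (u : ℝ → ℝ → EReal) (F : ℝ → ℝ → ℝ)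
    (hA2 : Assumption2 u) (hA3 : Assumption3 W F)
    (hA4 : Assumption4 u) :
    ∃ cs : ℝ → ℝ → ℝ, IsMaxSelection u F cs := by
  refine ⟨hamArgmax u F, fun p k hp hk => (hamArgmax_spec hA2 hA3 hA4 hp hk).1,
    continuousOn_hamArgmax hA2 hA3 hA4, fun p k hp hk => ?_⟩
  obtain ⟨hpos, hmax⟩ := hamArgmax_spec hA2 hA3 hA4 hp hk
  exact eq_ham_of_isMaxOn hA2 hA3 hk hpos hmax

/-- **Proposition 1.** Under Assumptions 1–4 there exists a positive continuous maximizer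
function `c*(p,k)` on `ℝ₊₊²` for the Hamiltonian. -/
theorem exists_max_selection (ρ : ℝ) (W : Set (ℝ → ℝ)) (u : ℝ → ℝ → EReal) (F : ℝ → ℝ → ℝ)
    (hA1 : Assumption1 ρ W) (hA2 : Assumption2 u) (hA3 : Assumption3 W F)
    (hA4 : Assumption4 u) :
    ∃ cs : ℝ → ℝ → ℝ, IsMaxSelection u F cs :=
  exists_max_selection_general W u F hA2 hA3 hA4

end
end

section
/- Let Γ : ℝ₊₊ ⇉ ℝ be a nonempty-, compact-, and convex-valued upper hemicontinuous set-valued map and fix k̄ > 0. Suppose there exist two positive continuous functions k̂(t) and k̲(t) on ℝ₊ such that k̲(t) ≤ k(t) ≤ k̂(t) for every T > 0, every solution k of the differential inclusion k̇(t) ∈ Γ(k(t)), k(0) = k̄ defined on [0,T], and every t ∈ [0,T]. Then the differential inclusion k̇(t) ∈ Γ(k(t)), k(0) = k̄ has a solution defined on all of ℝ₊. -/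
open MeasureTheory Real Set Filter Topology
open scoped ENNReal NNReal

noncomputable section

/-!
Each `Γ x` is a compact interval `[m x, M x]`, where `M = sSup ∘ Γ` is upper and `m = sInf ∘ Γ`
lower semicontinuous. If `0 ∈ Γ k̄` the constant path is a solution. Otherwise `Γ k̄` lies on one
side of `0`, and the reflection `x ↦ 2k̄ - x` reduces to `Γ k̄ ⊆ (0, ∞)`. By connectedness `Γ`
then stays positive up to its first zero `b` above `k̄` (or on all of `[k̄, ∞)`), and a solution
comes from a time change: with the travel time `τ x = ∫_{k̄}^x du / M u`, the path
`k t = sup {x | τ x ≤ t}` is locally Lipschitz, and the semicontinuity of `m` and `M` forces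
`k̇ t ∈ [m (k t), M (k t)]` wherever `k` is differentiable and has not yet reached `b`, where it
rests because `0 ∈ Γ b`. This path is global unless `τ` stays below some `T₀`; but then every
level is reached by a solution before time `T₀`, which the bounds `k̲ ≤ k ≤ k̂` on `[0, T₀]` forbid.
-/

theorem LipschitzOnWith.absContOn {g : ℝ → ℝ} {K : ℝ≥0} {a b : ℝ}
    (hg : LipschitzOnWith K g (Icc a b)) : AbsContOn g a b := by
  intro ε hε
  refine ⟨ε / (K + 1), by positivity, fun n s t hst _ hsum => ?_⟩
  have hterm : ∀ i, |g (t i) - g (s i)| ≤ K * (t i - s i) := fun i => by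
    have := hg.dist_le_mul (t i) ⟨(hst i).1.trans (hst i).2.1, (hst i).2.2⟩ (s i)
      ⟨(hst i).1, (hst i).2.1.trans (hst i).2.2⟩
    rwa [Real.dist_eq, Real.dist_eq, abs_of_nonneg (sub_nonneg.2 (hst i).2.1)] at this
  calc ∑ i, |g (t i) - g (s i)| ≤ K * ∑ i, (t i - s i) := by
        rw [Finset.mul_sum]; exact Finset.sum_le_sum fun i _ => hterm i
    _ ≤ K * (ε / (K + 1)) := mul_le_mul_of_nonneg_left hsum.le K.2
    _ < ε := by
        rw [mul_div_assoc', div_lt_iff₀ (by positivity)]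
        nlinarith [K.2]

theorem AbsContOn.const_sub {g : ℝ → ℝ} {a b : ℝ} (hg : AbsContOn g a b) (c : ℝ) :
    AbsContOn (fun t => c - g t) a b := by
  intro ε hε
  obtain ⟨δ, hδ, h⟩ := hg ε hε
  refine ⟨δ, hδ, fun n s t hst hdisj hsum => ?_⟩
  simpa only [sub_sub_sub_cancel_left, abs_sub_comm] using h n s t hst hdisj hsum

structure IsUHCCompactConvexOn (Γ : ℝ → Set ℝ) (s : Set ℝ) : Prop where
  nonempty : ∀ x ∈ s, (Γ x).Nonempty
  isCompact : ∀ x ∈ s, IsCompact (Γ x)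
  convex : ∀ x ∈ s, Convex ℝ (Γ x)
  uhc : ∀ x ∈ s, ∀ O : Set ℝ, IsOpen O → Γ x ⊆ O → ∀ᶠ y in 𝓝 x, Γ y ⊆ O

namespace IsUHCCompactConvexOn

variable {Γ : ℝ → Set ℝ} {s t : Set ℝ} {x c : ℝ}

theorem mono (hΓ : IsUHCCompactConvexOn Γ s) (hts : t ⊆ s) : IsUHCCompactConvexOn Γ t :=
  ⟨fun x hx => hΓ.nonempty x (hts hx), fun x hx => hΓ.isCompact x (hts hx),
    fun x hx => hΓ.convex x (hts hx), fun x hx => hΓ.uhc x (hts hx)⟩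

theorem sSup_mem (hΓ : IsUHCCompactConvexOn Γ s) (hx : x ∈ s) : sSup (Γ x) ∈ Γ x :=
  (hΓ.isCompact x hx).sSup_mem (hΓ.nonempty x hx)

theorem sInf_mem (hΓ : IsUHCCompactConvexOn Γ s) (hx : x ∈ s) : sInf (Γ x) ∈ Γ x :=
  (hΓ.isCompact x hx).sInf_mem (hΓ.nonempty x hx)

theorem sInf_le_sSup (hΓ : IsUHCCompactConvexOn Γ s) (hx : x ∈ s) : sInf (Γ x) ≤ sSup (Γ x) :=
  csInf_le_csSup (hΓ.nonempty x hx) (hΓ.isCompact x hx).bddBelow (hΓ.isCompact x hx).bddAbove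

theorem Icc_sInf_sSup_subset (hΓ : IsUHCCompactConvexOn Γ s) (hx : x ∈ s) :
    Icc (sInf (Γ x)) (sSup (Γ x)) ⊆ Γ x :=
  (hΓ.convex x hx).ordConnected.out (hΓ.sInf_mem hx) (hΓ.sSup_mem hx)

theorem upperSemicontinuousOn_sSup (hΓ : IsUHCCompactConvexOn Γ s) :
    UpperSemicontinuousOn (fun x => sSup (Γ x)) s := by
  intro x hx c hc
  have hsub : Γ x ⊆ Iio c := fun a ha => (le_csSup (hΓ.isCompact x hx).bddAbove ha).trans_lt hc
  filter_upwards [nhdsWithin_le_nhds (hΓ.uhc x hx _ isOpen_Iio hsub), self_mem_nhdsWithin]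
    with y hy hys
  exact hy (hΓ.sSup_mem hys)

theorem lowerSemicontinuousOn_sInf (hΓ : IsUHCCompactConvexOn Γ s) :
    LowerSemicontinuousOn (fun x => sInf (Γ x)) s := by
  intro x hx c hc
  have hsub : Γ x ⊆ Ioi c := fun a ha => hc.trans_le (csInf_le (hΓ.isCompact x hx).bddBelow ha)
  filter_upwards [nhdsWithin_le_nhds (hΓ.uhc x hx _ isOpen_Ioi hsub), self_mem_nhdsWithin]
    with y hy hys
  exact hy (hΓ.sInf_mem hys)

theorem exists_sSup_le (hΓ : IsUHCCompactConvexOn Γ s) (hs : IsCompact s) :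
    ∃ G > 0, ∀ x ∈ s, sSup (Γ x) ≤ G := by
  obtain ⟨C, hC⟩ := hΓ.upperSemicontinuousOn_sSup.bddAbove_of_isCompact hs
  exact ⟨max C 1, by positivity, fun x hx => (hC ⟨x, hx, rfl⟩).trans (le_max_left _ _)⟩

theorem mem_of_mem_closure (hΓ : IsUHCCompactConvexOn Γ s) (hx : x ∈ s)
    (hcl : x ∈ closure {y | c ∈ Γ y}) : c ∈ Γ x := by
  by_contra hc
  have hev := hΓ.uhc x hx {c}ᶜ isOpen_compl_singleton fun a ha hac => hc (hac ▸ ha)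
  obtain ⟨y, hyc, hy⟩ := ((mem_closure_iff_frequently.1 hcl).and_eventually hev).exists
  exact hy hyc rfl

theorem subset_Ioi_or_subset_Iio (hΓ : IsUHCCompactConvexOn Γ s) (hx : x ∈ s)
    (h0 : (0 : ℝ) ∉ Γ x) : Γ x ⊆ Ioi 0 ∨ Γ x ⊆ Iio 0 := by
  by_contra! h
  obtain ⟨a, ha, ha0⟩ := not_subset.1 h.1
  obtain ⟨b, hb, hb0⟩ := not_subset.1 h.2
  exact h0 ((hΓ.convex x hx).ordConnected.out ha hb ⟨not_lt.1 ha0, not_lt.1 hb0⟩)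

theorem subset_Ioi_of_isPreconnected (hΓ : IsUHCCompactConvexOn Γ s) (hs : IsPreconnected s)
    (h0 : ∀ x ∈ s, (0 : ℝ) ∉ Γ x) {x₀ : ℝ} (hx₀ : x₀ ∈ s) (hpos : Γ x₀ ⊆ Ioi 0) :
    ∀ x ∈ s, Γ x ⊆ Ioi 0 := by
  have hint : ∀ x ∈ s, ∀ O, IsOpen O → Γ x ⊆ O → x ∈ interior {y | Γ y ⊆ O} :=
    fun x hx O hO h => mem_interior_iff_mem_nhds.2 (hΓ.uhc x hx O hO h)
  have hsign : ∀ x ∈ s, Γ x ⊆ Ioi 0 → Γ x ⊆ Iio 0 → False := fun x hx hp hn => by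
    obtain ⟨a, ha⟩ := hΓ.nonempty x hx
    exact (mem_Ioi.1 (hp ha)).not_gt (hn ha)
  rcases isPreconnected_iff_subset_of_disjoint.1 hs _ _ isOpen_interior isOpen_interior
    (fun x hx => (hΓ.subset_Ioi_or_subset_Iio hx (h0 x hx)).imp
      (hint x hx _ isOpen_Ioi) (hint x hx _ isOpen_Iio))
    (eq_empty_of_forall_notMem fun x ⟨hx, hp, hn⟩ =>
      hsign x hx (interior_subset hp) (interior_subset hn)) with h | h
  · exact fun x hx => interior_subset (h hx)
  · exact (hsign x₀ hx₀ hpos (interior_subset (h hx₀))).elim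

theorem neg_comp_sub (hΓ : IsUHCCompactConvexOn Γ s) (A : ℝ) :
    IsUHCCompactConvexOn (fun x => -Γ (A - x)) {x | A - x ∈ s} := by
  refine ⟨fun x hx => (hΓ.nonempty _ hx).neg, fun x hx => (hΓ.isCompact _ hx).neg,
    fun x hx => (hΓ.convex _ hx).neg, fun x hx O hO hsub => ?_⟩
  have hsub' : Γ (A - x) ⊆ -O := fun a ha => mem_neg.2 (hsub (neg_mem_neg.2 ha))
  have hcont : Tendsto (fun y => A - y) (𝓝 x) (𝓝 (A - x)) := tendsto_const_nhds.sub tendsto_id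
  filter_upwards [hcont.eventually (hΓ.uhc _ hx _ hO.neg hsub')] with y hy a ha
  simpa using hy (mem_neg.1 ha)

end IsUHCCompactConvexOn

section TravelTime

variable {f : ℝ → ℝ≥0∞} {a x y : ℝ}

def travelTime (f : ℝ → ℝ≥0∞) (a x : ℝ) : ℝ≥0∞ := ∫⁻ u in Icc a x, f u

theorem travelTime_self : travelTime f a a = 0 := by
  simp [travelTime]

theorem travelTime_mono : Monotone (travelTime f a) :=
  fun _ _ h => lintegral_mono_set (Icc_subset_Icc_right h)

theorem travelTime_add (hax : a ≤ x) (hxy : x ≤ y) :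
    travelTime f a y = travelTime f a x + ∫⁻ u in Ioo x y, f u := by
  rw [travelTime, travelTime, ← Icc_union_Ioc_eq_Icc hax hxy,
    lintegral_union measurableSet_Ioc (disjoint_left.2 fun u h₁ h₂ => h₁.2.not_gt h₂.1),
    setLIntegral_congr Ioo_ae_eq_Ioc.symm]

theorem travelTime_le_of_forall_lt {c : ℝ≥0∞} (h : ∀ y ∈ Ico a x, travelTime f a y ≤ c) :
    travelTime f a x ≤ c := by
  rcases le_or_gt x a with hxa | hax
  · exact (travelTime_mono hxa).trans (travelTime_self.trans_le zero_le)
  have hunion : Ico a x = ⋃ y : Ico a x, Icc a (y : ℝ) :=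
    Subset.antisymm (fun u hu => mem_iUnion.2 ⟨⟨u, hu⟩, hu.1, le_rfl⟩)
      (iUnion_subset fun y => Icc_subset_Ico_right y.2.2)
  have hν : ∀ z, travelTime f a z = volume.withDensity f (Icc a z) :=
    fun z => (withDensity_apply _ measurableSet_Icc).symm
  rw [hν, measure_congr (Ico_ae_eq_Icc' ?_).symm, hunion,
    Monotone.measure_iUnion (s := fun y : Ico a x => Icc a (y : ℝ))
      fun _ _ hyz => Icc_subset_Icc_right hyz]
  · exact iSup_le fun y => (hν y).symm.trans_le (h y y.2)
  · exact withDensity_absolutelyContinuous _ _ (measure_singleton x)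

theorem ofReal_div_le_lintegral_Ioo {G : ℝ} (hG : 0 < G)
    (hf : ∀ u ∈ Ioo x y, ENNReal.ofReal G⁻¹ ≤ f u) :
    ENNReal.ofReal ((y - x) / G) ≤ ∫⁻ u in Ioo x y, f u := by
  calc ENNReal.ofReal ((y - x) / G) = ∫⁻ _ in Ioo x y, ENNReal.ofReal G⁻¹ := by
        rw [setLIntegral_const, Real.volume_Ioo, ← ENNReal.ofReal_mul (by positivity),
          div_eq_inv_mul]
    _ ≤ ∫⁻ u in Ioo x y, f u := setLIntegral_mono' measurableSet_Ioo hf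

theorem lintegral_Ioo_le_ofReal_div {l : ℝ} (hl : 0 < l)
    (hf : ∀ u ∈ Ioo x y, f u ≤ ENNReal.ofReal l⁻¹) :
    ∫⁻ u in Ioo x y, f u ≤ ENNReal.ofReal ((y - x) / l) := by
  calc ∫⁻ u in Ioo x y, f u ≤ ∫⁻ _ in Ioo x y, ENNReal.ofReal l⁻¹ :=
        lintegral_mono_ae ((ae_restrict_iff' measurableSet_Ioo).2 (Eventually.of_forall hf))
    _ = ENNReal.ofReal ((y - x) / l) := by
        rw [setLIntegral_const, Real.volume_Ioo, ← ENNReal.ofReal_mul (by positivity),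
          div_eq_inv_mul]

end TravelTime

section TimeChange

/-- The inverse of `travelTime f a` along `R`: the furthest point of `R` reached by time `t`. -/
def timeChange (f : ℝ → ℝ≥0∞) (R : Set ℝ) (a t : ℝ) : ℝ :=
  sSup {x ∈ R | travelTime f a x ≤ ENNReal.ofReal t}

/-- `exists_bound` keeps the supremum defining `timeChange` in `R`, away from the junk value
`sSup` takes on unbounded sets. -/
structure IsTimeChangeDomain (f : ℝ → ℝ≥0∞) (R : Set ℝ) (a : ℝ) : Prop where
  ordConnected : R.OrdConnected
  isLeast : IsLeast R a
  exists_bound : ∀ t : ℝ, ∃ z ∈ R, ∀ x ∈ R, travelTime f a x ≤ ENNReal.ofReal t → x ≤ z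

namespace IsTimeChangeDomain

variable {f : ℝ → ℝ≥0∞} {R : Set ℝ} {a s t x y : ℝ}

theorem left_mem_reached (hR : IsTimeChangeDomain f R a) :
    a ∈ {x ∈ R | travelTime f a x ≤ ENNReal.ofReal t} :=
  ⟨hR.isLeast.1, travelTime_self.trans_le zero_le⟩

theorem bddAbove_reached (hR : IsTimeChangeDomain f R a) :
    BddAbove {x ∈ R | travelTime f a x ≤ ENNReal.ofReal t} :=
  let ⟨z, _, hz⟩ := hR.exists_bound t
  ⟨z, fun x hx => hz x hx.1 hx.2⟩

theorem le_timeChange (hR : IsTimeChangeDomain f R a) (hx : x ∈ R)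
    (ht : travelTime f a x ≤ ENNReal.ofReal t) : x ≤ timeChange f R a t :=
  le_csSup hR.bddAbove_reached ⟨hx, ht⟩

theorem timeChange_le (hR : IsTimeChangeDomain f R a)
    (h : ∀ x ∈ R, travelTime f a x ≤ ENNReal.ofReal t → x ≤ y) : timeChange f R a t ≤ y :=
  csSup_le ⟨a, hR.left_mem_reached⟩ fun x hx => h x hx.1 hx.2

theorem left_le_timeChange (hR : IsTimeChangeDomain f R a) : a ≤ timeChange f R a t :=
  hR.le_timeChange hR.isLeast.1 (travelTime_self.trans_le zero_le)

theorem timeChange_mem (hR : IsTimeChangeDomain f R a) : timeChange f R a t ∈ R := by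
  obtain ⟨z, hz, hbound⟩ := hR.exists_bound t
  exact hR.ordConnected.out hR.isLeast.1 hz ⟨hR.left_le_timeChange, hR.timeChange_le hbound⟩

theorem mem_of_mem_Icc (hR : IsTimeChangeDomain f R a) (hy : y ∈ Icc a (timeChange f R a t)) :
    y ∈ R :=
  hR.ordConnected.out hR.isLeast.1 hR.timeChange_mem hy

theorem monotone_timeChange (hR : IsTimeChangeDomain f R a) : Monotone (timeChange f R a) :=
  fun _ _ hst => hR.timeChange_le fun _ hx hxs =>
    hR.le_timeChange hx (hxs.trans (ENNReal.ofReal_le_ofReal hst))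

theorem travelTime_timeChange_le (hR : IsTimeChangeDomain f R a) :
    travelTime f a (timeChange f R a t) ≤ ENNReal.ofReal t := by
  refine travelTime_le_of_forall_lt fun y hy => ?_
  obtain ⟨x, hx, hyx⟩ := exists_lt_of_lt_csSup ⟨a, hR.left_mem_reached⟩ hy.2
  exact (travelTime_mono hyx.le).trans hx.2

theorem lt_travelTime_of_timeChange_lt (hR : IsTimeChangeDomain f R a) (hy : y ∈ R)
    (h : timeChange f R a t < y) : ENNReal.ofReal t < travelTime f a y :=
  lt_of_not_ge fun hle => h.not_ge (hR.le_timeChange hy hle)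

theorem timeChange_zero (hR : IsTimeChangeDomain f R a)
    (hpos : ∀ x ∈ R, a < x → 0 < travelTime f a x) : timeChange f R a 0 = a := by
  refine le_antisymm (hR.timeChange_le fun x hx hx0 => ?_) hR.left_le_timeChange
  by_contra! hax
  exact (hpos x hx hax).not_ge (by simpa using hx0)

theorem timeChange_sub_le (hR : IsTimeChangeDomain f R a) {G : ℝ} (hs : 0 ≤ s) (hst : s ≤ t)
    (hG : 0 < G)
    (hf : ∀ u ∈ Ioo (timeChange f R a s) (timeChange f R a t), ENNReal.ofReal G⁻¹ ≤ f u) :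
    timeChange f R a t - timeChange f R a s ≤ G * (t - s) := by
  set ks := timeChange f R a s
  set kt := timeChange f R a t
  suffices kt - G * (t - s) ≤ ks by linarith
  refine le_of_forall_gt_imp_ge_of_dense fun y hy => ?_
  rcases le_or_gt kt y with hty | hyt
  · nlinarith
  have hyR : y ∈ R := hR.mem_of_mem_Icc ⟨hR.left_le_timeChange.trans hy.le, hyt.le⟩
  have hreach : ENNReal.ofReal s + ENNReal.ofReal ((kt - y) / G) < ENNReal.ofReal t :=
    calc ENNReal.ofReal s + ENNReal.ofReal ((kt - y) / G)
        < travelTime f a y + ∫⁻ u in Ioo y kt, f u :=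
          ENNReal.add_lt_add_of_lt_of_le ENNReal.ofReal_ne_top
            (hR.lt_travelTime_of_timeChange_lt hyR hy)
            (ofReal_div_le_lintegral_Ioo hG fun u hu => hf u ⟨hy.trans hu.1, hu.2⟩)
      _ = travelTime f a kt := (travelTime_add (hR.isLeast.2 hyR) hyt.le).symm
      _ ≤ ENNReal.ofReal t := hR.travelTime_timeChange_le
  rw [← ENNReal.ofReal_add hs (div_nonneg (by linarith) hG.le),
    ENNReal.ofReal_lt_ofReal_iff'] at hreach
  have := (div_lt_iff₀ hG).1 (by linarith [hreach.1] : (kt - y) / G < t - s)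
  linarith

theorem le_timeChange_add (hR : IsTimeChangeDomain f R a) {l : ℝ} (hs : 0 ≤ s) (hl : 0 < l)
    (hy : y ∈ R) (hsy : timeChange f R a s ≤ y)
    (hf : ∀ u ∈ Ioo (timeChange f R a s) y, f u ≤ ENNReal.ofReal l⁻¹) :
    y ≤ timeChange f R a (s + (y - timeChange f R a s) / l) := by
  refine hR.le_timeChange hy ?_
  rw [travelTime_add hR.left_le_timeChange hsy,
    ENNReal.ofReal_add hs (div_nonneg (by linarith) hl.le)]
  exact add_le_add hR.travelTime_timeChange_le (lintegral_Ioo_le_ofReal_div hl hf)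

end IsTimeChangeDomain

end TimeChange
section Ascent

/-- The reciprocal of the largest admissible speed: the density of the travel time. -/
def slowness (Γ : ℝ → Set ℝ) (u : ℝ) : ℝ≥0∞ := ENNReal.ofReal (sSup (Γ u))⁻¹

theorem ofReal_inv_le_slowness {Γ : ℝ → Set ℝ} {u G : ℝ} (hpos : 0 < sSup (Γ u))
    (hG : sSup (Γ u) ≤ G) : ENNReal.ofReal G⁻¹ ≤ slowness Γ u :=
  ENNReal.ofReal_le_ofReal (inv_anti₀ hpos hG)

theorem slowness_le_ofReal_inv {Γ : ℝ → Set ℝ} {u l : ℝ} (hl : 0 < l) (h : l ≤ sSup (Γ u)) :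
    slowness Γ u ≤ ENNReal.ofReal l⁻¹ :=
  ENNReal.ofReal_le_ofReal (inv_anti₀ hl h)

structure IsAscentDomain (Γ : ℝ → Set ℝ) (R : Set ℝ) (kbar : ℝ) : Prop
    extends IsTimeChangeDomain (slowness Γ) R kbar where
  regular : IsUHCCompactConvexOn Γ R
  pos : ∀ x ∈ R, (∃ y ∈ R, x < y) → Γ x ⊆ Ioi 0

namespace IsAscentDomain

variable {Γ : ℝ → Set ℝ} {R : Set ℝ} {kbar d s t x z : ℝ}

theorem sSup_pos (hR : IsAscentDomain Γ R kbar) (hx : x ∈ R) (hz : z ∈ R) (hxz : x < z) :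
    0 < sSup (Γ x) :=
  hR.pos x hx ⟨z, hz, hxz⟩ (hR.regular.sSup_mem hx)

theorem travelTime_pos (hR : IsAscentDomain Γ R kbar) (hx : x ∈ R) (hlt : kbar < x) :
    0 < travelTime (slowness Γ) kbar x := by
  have hsub : Icc kbar x ⊆ R := hR.ordConnected.out hR.isLeast.1 hx
  obtain ⟨G, hG, hGb⟩ := (hR.regular.mono hsub).exists_sSup_le isCompact_Icc
  calc (0 : ℝ≥0∞) < ENNReal.ofReal ((x - kbar) / G) := ENNReal.ofReal_pos.2 (by
        have := sub_pos.2 hlt; positivity)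
    _ ≤ ∫⁻ u in Ioo kbar x, slowness Γ u :=
        ofReal_div_le_lintegral_Ioo hG fun u hu => ofReal_inv_le_slowness
          (hR.sSup_pos (hsub (Ioo_subset_Icc_self hu)) hx hu.2) (hGb u (Ioo_subset_Icc_self hu))
    _ ≤ travelTime (slowness Γ) kbar x := lintegral_mono_set Ioo_subset_Icc_self

theorem timeChange_zero (hR : IsAscentDomain Γ R kbar) :
    timeChange (slowness Γ) R kbar 0 = kbar :=
  hR.toIsTimeChangeDomain.timeChange_zero fun _ hx hlt => hR.travelTime_pos hx hlt

theorem timeChange_sub_le_of_sSup_le (hR : IsAscentDomain Γ R kbar) {G : ℝ} (hs : 0 ≤ s)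
    (hst : s ≤ t) (hG : 0 < G)
    (hb : ∀ u ∈ Ioo (timeChange (slowness Γ) R kbar s) (timeChange (slowness Γ) R kbar t),
      sSup (Γ u) ≤ G) :
    timeChange (slowness Γ) R kbar t - timeChange (slowness Γ) R kbar s ≤ G * (t - s) := by
  refine hR.timeChange_sub_le hs hst hG fun u hu => ofReal_inv_le_slowness ?_ (hb u hu)
  exact hR.sSup_pos (hR.mem_of_mem_Icc ⟨hR.left_le_timeChange.trans hu.1.le, hu.2.le⟩)
    hR.timeChange_mem hu.2

theorem exists_lipschitzOnWith (hR : IsAscentDomain Γ R kbar) (T : ℝ) :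
    ∃ K, LipschitzOnWith K (timeChange (slowness Γ) R kbar) (Icc 0 T) := by
  obtain ⟨G, hG, hGb⟩ := (hR.regular.mono fun _ => hR.mem_of_mem_Icc (t := T)).exists_sSup_le
    isCompact_Icc
  have key : ∀ s ∈ Icc 0 T, ∀ t ∈ Icc 0 T, s ≤ t → dist (timeChange (slowness Γ) R kbar t)
      (timeChange (slowness Γ) R kbar s) ≤ G * dist t s := fun s hs t ht hst => by
    rw [Real.dist_eq, Real.dist_eq, abs_of_nonneg (sub_nonneg.2 (hR.monotone_timeChange hst)),
      abs_of_nonneg (sub_nonneg.2 hst)]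
    exact hR.timeChange_sub_le_of_sSup_le hs.1 hst hG fun u hu => hGb u
      ⟨hR.left_le_timeChange.trans hu.1.le, hu.2.le.trans (hR.monotone_timeChange ht.2)⟩
  refine ⟨G.toNNReal, LipschitzOnWith.of_dist_le' fun t ht s hs => ?_⟩
  rcases le_total s t with hst | hts
  · exact key s hs t ht hst
  · rw [dist_comm, dist_comm t]; exact key t ht s hs hts

theorem deriv_le_sSup (hR : IsAscentDomain Γ R kbar) (ht : 0 ≤ t) (hz : z ∈ R)
    (hlt : timeChange (slowness Γ) R kbar t < z)
    (hd : HasDerivAt (timeChange (slowness Γ) R kbar) d t) :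
    d ≤ sSup (Γ (timeChange (slowness Γ) R kbar t)) := by
  set k := timeChange (slowness Γ) R kbar
  have hx₀ : k t ∈ R := hR.timeChange_mem
  refine le_of_forall_gt_imp_ge_of_dense fun c hc => ?_
  have hc0 : 0 < c := (hR.sSup_pos hx₀ hz hlt).trans hc
  obtain ⟨δ, hδ, hnear⟩ := Metric.eventually_nhds_iff.1
    (eventually_nhdsWithin_iff.1 (hR.regular.upperSemicontinuousOn_sSup (k t) hx₀ c hc))
  obtain ⟨G, hG, hGb⟩ :=
    (hR.regular.mono fun _ => hR.mem_of_mem_Icc (t := t + 1)).exists_sSup_le isCompact_Icc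
  -- For small `h`, `k` stays within `δ` of `k t`, where its speed is less than `c`.
  have hev : ∀ᶠ h in 𝓝[>] (0 : ℝ), h⁻¹ • (k (t + h) - k t) ≤ c := by
    filter_upwards [Ioo_mem_nhdsGT (show (0 : ℝ) < min 1 (δ / G) by positivity)] with h hh
    have hth : t ≤ t + h := le_add_of_nonneg_right hh.1.le
    have hh1 : h ≤ 1 := hh.2.le.trans (min_le_left _ _)
    have hstep : k (t + h) - k t ≤ G * h := by
      simpa using hR.timeChange_sub_le_of_sSup_le ht hth hG fun u hu =>
        hGb u ⟨hR.left_le_timeChange.trans hu.1.le,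
          hu.2.le.trans (hR.monotone_timeChange (by linarith))⟩
    have hδh : G * h < δ := (lt_div_iff₀' hG).1 (hh.2.trans_le (min_le_right _ _))
    have hslow := hR.timeChange_sub_le_of_sSup_le ht hth hc0 fun u hu =>
      (hnear (by rw [Real.dist_eq, abs_of_pos (by linarith [hu.1])]; linarith [hu.2])
        (hR.mem_of_mem_Icc ⟨hR.left_le_timeChange.trans hu.1.le, hu.2.le⟩)).le
    rw [smul_eq_mul, inv_mul_le_iff₀ hh.1]
    linarith
  exact le_of_tendsto hd.tendsto_slope_zero_right hev

theorem sInf_le_deriv (hR : IsAscentDomain Γ R kbar) (ht : 0 ≤ t) (hz : z ∈ R)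
    (hlt : timeChange (slowness Γ) R kbar t < z)
    (hd : HasDerivAt (timeChange (slowness Γ) R kbar) d t) :
    sInf (Γ (timeChange (slowness Γ) R kbar t)) ≤ d := by
  set k := timeChange (slowness Γ) R kbar
  have hx₀ : k t ∈ R := hR.timeChange_mem
  have hm0 : 0 < sInf (Γ (k t)) := hR.pos _ hx₀ ⟨z, hz, hlt⟩ (hR.regular.sInf_mem hx₀)
  refine le_of_forall_lt_imp_le_of_dense fun c hc => ?_
  set l := max c (sInf (Γ (k t)) / 2)
  have hl0 : 0 < l := lt_max_of_lt_right (half_pos hm0)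
  obtain ⟨δ, hδ, hnear⟩ := Metric.eventually_nhds_iff.1 (eventually_nhdsWithin_iff.1
    (hR.regular.lowerSemicontinuousOn_sInf (k t) hx₀ l (max_lt hc (half_lt_self hm0))))
  -- For small `h`, the speed on `[k t, k t + l * h]` is at least `l`.
  have hev : ∀ᶠ h in 𝓝[>] (0 : ℝ), l ≤ h⁻¹ • (k (t + h) - k t) := by
    have hpos : (0 : ℝ) < min (δ / l) ((z - k t) / l) := lt_min (by positivity)
      (div_pos (by linarith) hl0)
    filter_upwards [Ioo_mem_nhdsGT hpos] with h hh
    have hδh : l * h < δ := (lt_div_iff₀' hl0).1 (hh.2.trans_le (min_le_left _ _))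
    have hzh : l * h ≤ z - k t := ((lt_div_iff₀' hl0).1 (hh.2.trans_le (min_le_right _ _))).le
    have hyR : k t + l * h ∈ R :=
      hR.ordConnected.out hx₀ hz ⟨by nlinarith [hh.1], by linarith⟩
    have hfast := hR.le_timeChange_add ht hl0 hyR (by nlinarith [hh.1]) fun u hu => by
      have huR : u ∈ R := hR.ordConnected.out hx₀ hyR ⟨hu.1.le, hu.2.le⟩
      refine slowness_le_ofReal_inv hl0 ((hnear ?_ huR).le.trans (hR.regular.sInf_le_sSup huR))
      rw [Real.dist_eq, abs_of_pos (by linarith [hu.1])]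
      linarith [hu.2]
    rw [show k t + l * h - k t = l * h by ring, mul_div_cancel_left₀ h hl0.ne'] at hfast
    rw [smul_eq_mul, le_inv_mul_iff₀ hh.1]
    linarith
  exact (le_max_left _ _).trans (ge_of_tendsto hd.tendsto_slope_zero_right hev)

theorem deriv_eq_zero_of_forall_le (hR : IsAscentDomain Γ R kbar)
    (htop : ∀ y ∈ R, y ≤ timeChange (slowness Γ) R kbar t)
    (hd : HasDerivAt (timeChange (slowness Γ) R kbar) d t) : d = 0 := by
  set k := timeChange (slowness Γ) R kbar
  have hev : ∀ᶠ h in 𝓝[>] (0 : ℝ), (0 : ℝ) = h⁻¹ • (k (t + h) - k t) := by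
    filter_upwards [self_mem_nhdsWithin] with h hh
    have hrest : k (t + h) = k t := le_antisymm (htop _ hR.timeChange_mem)
      (hR.monotone_timeChange (by linarith [mem_Ioi.1 hh]))
    rw [hrest, sub_self, smul_zero]
  exact tendsto_nhds_unique hd.tendsto_slope_zero_right (tendsto_const_nhds.congr' hev)

theorem solvesInclOn (hR : IsAscentDomain Γ R kbar) (hkbar : 0 < kbar) {I : Set ℝ}
    (hI : I ⊆ Ici 0)
    (hmove : ∀ᵐ t, t ∈ I → (∃ y ∈ R, timeChange (slowness Γ) R kbar t < y) ∨
      (0 : ℝ) ∈ Γ (timeChange (slowness Γ) R kbar t)) :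
    SolvesInclOn Γ kbar (timeChange (slowness Γ) R kbar) I := by
  refine ⟨fun a b ha _ _ => ?_, hR.timeChange_zero,
    fun _ _ => hkbar.trans_le hR.left_le_timeChange, ?_⟩
  · obtain ⟨K, hK⟩ := hR.exists_lipschitzOnWith b
    exact (hK.mono (Icc_subset_Icc_left (hI ha))).absContOn
  filter_upwards [hR.monotone_timeChange.ae_differentiableAt, hmove] with t hdiff hm ht
  by_cases hlt : ∃ y ∈ R, timeChange (slowness Γ) R kbar t < y
  · obtain ⟨z, hz, hzt⟩ := hlt
    exact ⟨_, hR.regular.Icc_sInf_sSup_subset hR.timeChange_mem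
      ⟨hR.sInf_le_deriv (hI ht) hz hzt hdiff.hasDerivAt,
        hR.deriv_le_sSup (hI ht) hz hzt hdiff.hasDerivAt⟩, hdiff.hasDerivAt⟩
  · push Not at hlt
    have hd := hdiff.hasDerivAt
    rw [hR.deriv_eq_zero_of_forall_le hlt hd] at hd
    exact ⟨0, (hm ht).resolve_left (by simpa using hlt), hd⟩

end IsAscentDomain

end Ascent

section Solutions

variable {Γ : ℝ → Set ℝ} {kbar b : ℝ}

theorem isAscentDomain_Icc (hΓ : IsUHCCompactConvexOn Γ (Icc kbar b)) (hb : kbar ≤ b)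
    (hup : ∀ x ∈ Ico kbar b, Γ x ⊆ Ioi 0) : IsAscentDomain Γ (Icc kbar b) kbar where
  ordConnected := ordConnected_Icc
  isLeast := isLeast_Icc hb
  exists_bound _ := ⟨b, right_mem_Icc.2 hb, fun _ hx _ => hx.2⟩
  regular := hΓ
  pos x hx := fun ⟨_, hy, hxy⟩ => hup x ⟨hx.1, hxy.trans_le hy.2⟩

theorem exists_solution_of_zero_mem (hΓ : IsUHCCompactConvexOn Γ (Icc kbar b)) (hkbar : 0 < kbar)
    (hb : kbar ≤ b) (hup : ∀ x ∈ Ico kbar b, Γ x ⊆ Ioi 0) (hb0 : (0 : ℝ) ∈ Γ b) :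
    ∃ k, SolvesInclOn Γ kbar k (Ici 0) ∧ ∀ t, k t ∈ Icc kbar b := by
  have hR := isAscentDomain_Icc hΓ hb hup
  refine ⟨_, hR.solvesInclOn hkbar subset_rfl (Eventually.of_forall fun t _ => ?_),
    fun _ => hR.timeChange_mem⟩
  rcases (hR.timeChange_mem (t := t)).2.lt_or_eq with hlt | heq
  · exact Or.inl ⟨b, right_mem_Icc.2 hb, hlt⟩
  · exact Or.inr (by rwa [heq])

theorem exists_solution_reaching (hΓ : IsUHCCompactConvexOn Γ (Icc kbar b)) (hkbar : 0 < kbar)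
    (hb : kbar < b) (hup : ∀ x ∈ Ico kbar b, Γ x ⊆ Ioi 0)
    (hfin : travelTime (slowness Γ) kbar b ≠ ⊤) :
    ∃ k, 0 < (travelTime (slowness Γ) kbar b).toReal ∧
      SolvesInclOn Γ kbar k (Icc 0 (travelTime (slowness Γ) kbar b).toReal) ∧
      (∀ t, k t ∈ Icc kbar b) ∧ k (travelTime (slowness Γ) kbar b).toReal = b := by
  have hR := isAscentDomain_Icc hΓ hb.le hup
  set T := (travelTime (slowness Γ) kbar b).toReal
  have hT : travelTime (slowness Γ) kbar b = ENNReal.ofReal T := (ENNReal.ofReal_toReal hfin).symm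
  refine ⟨_, ENNReal.toReal_pos (hR.travelTime_pos (right_mem_Icc.2 hb.le) hb).ne' hfin,
    hR.solvesInclOn hkbar (fun _ ht => ht.1) ?_, fun _ => hR.timeChange_mem,
    le_antisymm hR.timeChange_mem.2 (hR.le_timeChange (right_mem_Icc.2 hb.le) hT.le)⟩
  filter_upwards [compl_mem_ae_iff.2 (measure_singleton T)] with t htT ht
  refine Or.inl ⟨b, right_mem_Icc.2 hb.le, hR.timeChange_mem.2.lt_of_ne fun heq => htT ?_⟩
  have hle := hR.travelTime_timeChange_le (t := t)
  rw [heq, hT, ENNReal.ofReal_le_ofReal_iff ht.1] at hle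
  exact le_antisymm ht.2 hle

theorem exists_first_zero {D : Set ℝ} (hD : D.OrdConnected) (hmin : IsLeast D kbar)
    (hΓ : IsUHCCompactConvexOn Γ D) (hpos : Γ kbar ⊆ Ioi 0) (hzero : ∃ x ∈ D, (0 : ℝ) ∈ Γ x) :
    ∃ b ∈ D, kbar < b ∧ (0 : ℝ) ∈ Γ b ∧ ∀ x ∈ Ico kbar b, Γ x ⊆ Ioi 0 := by
  obtain ⟨z, hzD, hz0⟩ := hzero
  set Z := {x ∈ D | (0 : ℝ) ∈ Γ x}
  have hbdd : BddBelow Z := ⟨kbar, fun x hx => hmin.2 hx.1⟩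
  have hkb : kbar ≤ sInf Z := le_csInf ⟨z, hzD, hz0⟩ fun x hx => hmin.2 hx.1
  have hbD : sInf Z ∈ D := hD.out hmin.1 hzD ⟨hkb, csInf_le hbdd ⟨hzD, hz0⟩⟩
  have hb0 : (0 : ℝ) ∈ Γ (sInf Z) := hΓ.mem_of_mem_closure hbD
    (closure_mono (fun x hx => hx.2) (csInf_mem_closure ⟨z, hzD, hz0⟩ hbdd))
  have hkb' : kbar < sInf Z := hkb.lt_of_ne fun h => lt_irrefl (0 : ℝ) (hpos (h ▸ hb0))
  have hsub : Ico kbar (sInf Z) ⊆ D := fun x hx => hD.out hmin.1 hbD ⟨hx.1, hx.2.le⟩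
  exact ⟨sInf Z, hbD, hkb', hb0, (hΓ.mono hsub).subset_Ioi_of_isPreconnected isPreconnected_Ico
    (fun x hx h0 => notMem_of_lt_csInf hx.2 hbdd ⟨hsub hx, h0⟩) (left_mem_Ico.2 hkb') hpos⟩

theorem exists_global_or_reach_in_bounded_time {D : Set ℝ} (hD : D.OrdConnected)
    (hmin : IsLeast D kbar) (hnomax : ∀ x ∈ D, ∃ y ∈ D, x < y) (hΓ : IsUHCCompactConvexOn Γ D)
    (hkbar : 0 < kbar) (hpos : Γ kbar ⊆ Ioi 0) :
    (∃ k, SolvesInclOn Γ kbar k (Ici 0) ∧ ∀ t, k t ∈ D) ∨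
      ∃ T₀, ∀ x ∈ D, kbar < x → ∃ T ∈ Ioc 0 T₀, ∃ k,
        SolvesInclOn Γ kbar k (Icc 0 T) ∧ (∀ t, k t ∈ D) ∧ k T = x := by
  by_cases hzero : ∃ x ∈ D, (0 : ℝ) ∈ Γ x
  · obtain ⟨b, hbD, hkb, hb0, hup⟩ := exists_first_zero hD hmin hΓ hpos hzero
    have hsub : Icc kbar b ⊆ D := hD.out hmin.1 hbD
    obtain ⟨k, hk, hkD⟩ := exists_solution_of_zero_mem (hΓ.mono hsub) hkbar hkb.le hup hb0
    exact Or.inl ⟨k, hk, fun t => hsub (hkD t)⟩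
  push Not at hzero
  have hup : ∀ x ∈ D, Γ x ⊆ Ioi 0 :=
    hΓ.subset_Ioi_of_isPreconnected hD.isPreconnected hzero hmin.1 hpos
  by_cases hesc : ∀ t : ℝ, ∃ x ∈ D, ENNReal.ofReal t < travelTime (slowness Γ) kbar x
  · have hR : IsAscentDomain Γ D kbar :=
      { ordConnected := hD
        isLeast := hmin
        exists_bound := fun t => by
          obtain ⟨z, hz, hlt⟩ := hesc t
          exact ⟨z, hz, fun x _ hxt => le_of_not_gt fun hzx =>
            (hlt.trans_le ((travelTime_mono hzx.le).trans hxt)).false⟩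
        regular := hΓ
        pos := fun x hx _ => hup x hx }
    exact Or.inl ⟨_, hR.solvesInclOn hkbar subset_rfl
      (Eventually.of_forall fun _ _ => Or.inl (hnomax _ hR.timeChange_mem)),
      fun _ => hR.timeChange_mem⟩
  push Not at hesc
  obtain ⟨T₀, hT₀⟩ := hesc
  refine Or.inr ⟨max T₀ 0, fun x hx hkx => ?_⟩
  have hsub : Icc kbar x ⊆ D := hD.out hmin.1 hx
  obtain ⟨k, hT, hk, hkD, hkx⟩ := exists_solution_reaching (hΓ.mono hsub) hkbar hkx
    (fun u hu => hup u (hsub (Ico_subset_Icc_self hu)))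
    (ne_top_of_le_ne_top ENNReal.ofReal_ne_top (hT₀ x hx))
  exact ⟨_, ⟨hT, ENNReal.toReal_le_of_le_ofReal (le_max_right _ _)
    ((hT₀ x hx).trans (ENNReal.ofReal_le_ofReal (le_max_left _ _)))⟩,
    k, hk, fun t => hsub (hkD t), hkx⟩

end Solutions

section Reduction

variable {Γ : ℝ → Set ℝ} {kbar : ℝ}

theorem solvesInclOn_const (hkbar : 0 < kbar) (h0 : (0 : ℝ) ∈ Γ kbar) :
    SolvesInclOn Γ kbar (fun _ => kbar) (Ici 0) where
  locAC _ _ _ _ _ ε hε := ⟨1, one_pos, fun _ _ _ _ _ _ => by simpa using hε⟩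
  init := rfl
  pos _ _ := hkbar
  hasDeriv := Eventually.of_forall fun t _ => ⟨0, h0, hasDerivAt_const t kbar⟩

theorem SolvesInclOn.reflect {k : ℝ → ℝ} {I : Set ℝ}
    (h : SolvesInclOn (fun x => -Γ (2 * kbar - x)) kbar k I) (hlt : ∀ t ∈ I, k t < 2 * kbar) :
    SolvesInclOn Γ kbar (fun t => 2 * kbar - k t) I where
  locAC a b ha hb hab := (h.locAC a b ha hb hab).const_sub (2 * kbar)
  init := by rw [h.init]; ring
  pos t ht := sub_pos.2 (hlt t ht)
  hasDeriv := by
    filter_upwards [h.hasDeriv] with t ht hI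
    obtain ⟨d, hd, hk⟩ := ht hI
    have hderiv := (hasDerivAt_const t (2 * kbar)).sub hk
    rw [zero_sub] at hderiv
    exact ⟨-d, mem_neg.1 hd, hderiv⟩

theorem exists_solution_of_subset_Ioi (hΓ : IsUHCCompactConvexOn Γ (Ioi 0)) (hkbar : 0 < kbar)
    (hpos : Γ kbar ⊆ Ioi 0) {khi : ℝ → ℝ} (hcont : ContinuousOn khi (Ici 0))
    (hbound : ∀ T, 0 < T → ∀ k, SolvesInclOn Γ kbar k (Icc 0 T) → k T ≤ khi T) :
    ∃ k, SolvesInclOn Γ kbar k (Ici 0) := by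
  rcases exists_global_or_reach_in_bounded_time ordConnected_Ici isLeast_Ici
      (fun x hx => ⟨x + 1, mem_Ici.2 (by linarith [mem_Ici.1 hx]), lt_add_one x⟩)
      (hΓ.mono fun x hx => hkbar.trans_le hx) hkbar hpos with ⟨k, hk, -⟩ | ⟨T₀, hreach⟩
  · exact ⟨k, hk⟩
  obtain ⟨C, hC⟩ :=
    (isCompact_Icc (a := 0) (b := T₀)).bddAbove_image (hcont.mono Icc_subset_Ici_self)
  obtain ⟨T, hT, k, hk, -, hkx⟩ := hreach (max kbar C + 1)
    (mem_Ici.2 (by linarith [le_max_left kbar C])) (by linarith [le_max_left kbar C])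
  have := (hbound T hT.1 k hk).trans (hC ⟨T, ⟨hT.1.le, hT.2⟩, rfl⟩)
  linarith [le_max_right kbar C]

theorem exists_solution_of_subset_Iio (hΓ : IsUHCCompactConvexOn Γ (Ioi 0)) (hkbar : 0 < kbar)
    (hneg : Γ kbar ⊆ Iio 0) {klo : ℝ → ℝ} (hcont : ContinuousOn klo (Ici 0))
    (hlo : ∀ t, 0 ≤ t → 0 < klo t)
    (hbound : ∀ T, 0 < T → ∀ k, SolvesInclOn Γ kbar k (Icc 0 T) → klo T ≤ k T) :
    ∃ k, SolvesInclOn Γ kbar k (Ici 0) := by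
  have hΓ' : IsUHCCompactConvexOn (fun x => -Γ (2 * kbar - x)) (Ico kbar (2 * kbar)) :=
    (hΓ.neg_comp_sub (2 * kbar)).mono fun x hx => sub_pos.2 hx.2
  have hpos' : -Γ (2 * kbar - kbar) ⊆ Ioi 0 := fun a ha => by
    rw [two_mul, add_sub_cancel_right] at ha
    simpa using hneg (mem_neg.1 ha)
  rcases exists_global_or_reach_in_bounded_time ordConnected_Ico (isLeast_Ico (by linarith))
      (fun x hx => ⟨(x + 2 * kbar) / 2, ⟨by linarith [hx.1, hx.2], by linarith [hx.2]⟩,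
        by linarith [hx.2]⟩) hΓ' hkbar hpos' with ⟨k, hk, hkD⟩ | ⟨T₀, hreach⟩
  · exact ⟨_, hk.reflect fun t _ => (hkD t).2⟩
  -- A reflected solution reaching `2 * kbar - ε / 2` would drop below `klo` on `[0, T₀]`.
  obtain ⟨m, hm, hmin⟩ := isCompact_Icc.exists_isMinOn ⟨0, le_rfl, le_max_right T₀ 0⟩
    (hcont.mono Icc_subset_Ici_self)
  set ε := min (klo m) kbar
  have hε : 0 < ε := lt_min (hlo m hm.1) hkbar
  obtain ⟨T, hT, k, hk, hkD, hkx⟩ := hreach (2 * kbar - ε / 2)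
    ⟨by linarith [min_le_right (klo m) kbar], by linarith⟩ (by linarith [min_le_right (klo m) kbar])
  have hlow := hbound T hT.1 _ (hk.reflect fun t _ => (hkD t).2)
  have hmT : klo m ≤ klo T := hmin ⟨hT.1.le, hT.2.trans (le_max_left _ _)⟩
  simp only [hkx] at hlow
  linarith [min_le_left (klo m) kbar]

end Reduction

/-- **Lemma 6.** A differential inclusion with a nonempty-, compact-, convex-valued upper
hemicontinuous right-hand side, whose solutions are uniformly sandwiched between two positive
continuous functions, has a global solution on `ℝ₊`. -/
theorem inclusion_global_solution (Γ : ℝ → Set ℝ) (kbar : ℝ) (hkbar : 0 < kbar)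
    (hne : ∀ x : ℝ, 0 < x → (Γ x).Nonempty)
    (hcomp : ∀ x : ℝ, 0 < x → IsCompact (Γ x))
    (hconv : ∀ x : ℝ, 0 < x → Convex ℝ (Γ x))
    (huhc : ∀ x : ℝ, 0 < x → ∀ O : Set ℝ, IsOpen O → Γ x ⊆ O → ∀ᶠ y in 𝓝 x, Γ y ⊆ O)
    (khi klo : ℝ → ℝ)
    (hconthi : ContinuousOn khi (Set.Ici 0)) (hcontlo : ContinuousOn klo (Set.Ici 0))
    (hpos : ∀ t : ℝ, 0 ≤ t → 0 < klo t ∧ 0 < khi t)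
    (hsandwich : ∀ T : ℝ, 0 < T → ∀ k : ℝ → ℝ, SolvesInclOn Γ kbar k (Set.Icc 0 T) →
      ∀ t ∈ Set.Icc (0:ℝ) T, klo t ≤ k t ∧ k t ≤ khi t) :
    ∃ k : ℝ → ℝ, SolvesInclOn Γ kbar k (Set.Ici 0) := by
  have hΓ : IsUHCCompactConvexOn Γ (Ioi 0) := ⟨hne, hcomp, hconv, huhc⟩
  by_cases h0 : (0 : ℝ) ∈ Γ kbar
  · exact ⟨_, solvesInclOn_const hkbar h0⟩
  rcases hΓ.subset_Ioi_or_subset_Iio hkbar h0 with hup | hdown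
  · exact exists_solution_of_subset_Ioi hΓ hkbar hup hconthi fun T hT k hk =>
      (hsandwich T hT k hk T (right_mem_Icc.2 hT.le)).2
  · exact exists_solution_of_subset_Iio hΓ hkbar hdown hcontlo (fun t ht => (hpos t ht).1)
      fun T hT k hk => (hsandwich T hT k hk T (right_mem_Icc.2 hT.le)).1
end
end
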